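/- arXiv:1806.03802 — 4 statements merged into one kernel-verified Lean document; each statement's English description precedes it below -/
import Mathlib

section
/- Let a be a weak composition of length n. The set { β^k Q̄_a : k ≥ 0, a a weak composition of length n } spans ℤ[x_1,...,x_n][β] over ℤ and is linearly independent; hence the quasiLascoux polynomials form a basis of Poly_n[β]. -/
def Dominates (b a : List ℕ) : Prop :=
  b.length = a.length ∧ ∀ i : ℕ, (a.take i).sum ≤ (b.take i).sum

def posPart (a : List ℕ) : List ℕ := a.filter (fun v => v != 0)
def skyline (a : List ℕ) : Finset (ℕ × ℕ) :=
  (Finset.range a.length).biUnion fun i =>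
    (Finset.range (a.getD i 0)).image fun j => (i + 1, j + 1)
abbrev SVF : Type := ℕ → ℕ → Finset ℕ

def shapeLen (b : List ℕ) (i : ℕ) : ℕ := b.getD (i - 1) 0

def SBox (b : List ℕ) (i j : ℕ) : Prop :=
  1 ≤ i ∧ i ≤ b.length ∧ 1 ≤ j ∧ j ≤ shapeLen b i

def anc (F : SVF) (i j : ℕ) : ℕ := (F i j).sup id

noncomputable def infv (F : SVF) (i j : ℕ) : ℕ := sInf (F i j : Set ℕ)

def InvTriple (be al ga : ℕ) : Prop := (ga < al ∧ al ≤ be) ∨ (al ≤ be ∧ be < ga)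

def RowOK (b : List ℕ) (F : SVF) (i j v : ℕ) : Prop :=
  (j = 1 ∨ v ≤ infv F i (j - 1)) ∧ (¬ SBox b i (j + 1) ∨ anc F i (j + 1) ≤ v)

def SVSSF (b : List ℕ) (F : SVF) : Prop :=
  (∀ i j, (F i j).Nonempty ↔ SBox b i j) ∧
  (∀ i j v, v ∈ F i j → 0 < v) ∧
  (∀ j i i', i ≠ i' → ∀ v, v ∈ F i j → v ∉ F i' j) ∧
  (∀ i j, SBox b i j → SBox b i (j + 1) → anc F i (j + 1) ≤ infv F i j) ∧
  (∀ i i' j, i < i' → SBox b i j → SBox b i (j + 1) → SBox b i' (j + 1) →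
      shapeLen b i' ≤ shapeLen b i → InvTriple (anc F i j) (anc F i (j + 1)) (anc F i' (j + 1))) ∧
  (∀ i i' j, i < i' → SBox b i' j → SBox b i' (j + 1) → SBox b i j →
      shapeLen b i < shapeLen b i' → InvTriple (anc F i' j) (anc F i' (j + 1)) (anc F i j)) ∧
  (∀ i j v, SBox b i j → v ∈ F i j → v ≠ anc F i j →
      ∀ i', SBox b i' j → anc F i' j < anc F i j → v < anc F i' j → ¬ RowOK b F i' j v)

def LASSF (b : List ℕ) (F : SVF) : Prop :=
  SVSSF b F ∧ ∀ i, SBox b i 1 → anc F i 1 = i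

def wtF (b : List ℕ) (F : SVF) (v : ℕ) : ℕ :=
  ((skyline b).filter fun p => v ∈ F p.1 p.2).card

def sizeF (b : List ℕ) (F : SVF) : ℕ := ∑ p ∈ skyline b, (F p.1 p.2).card

noncomputable def vmonoF (n : ℕ) (w : ℕ → ℕ) : MvPolynomial (Fin n) (Polynomial ℤ) :=
  ∏ i : Fin n, MvPolynomial.X i ^ w (i.1 + 1)

noncomputable def atomPolyF (n : ℕ) (b : List ℕ) : MvPolynomial (Fin n) (Polynomial ℤ) :=
  ∑ᶠ F ∈ {F : SVF | LASSF b F},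
    MvPolynomial.C (Polynomial.X ^ (sizeF b F - b.sum)) * vmonoF n (wtF b F)

noncomputable def quasiLascouxF (n : ℕ) (a : List ℕ) : MvPolynomial (Fin n) (Polynomial ℤ) :=
  ∑ᶠ b ∈ {b : List ℕ | Dominates b a ∧ posPart b = posPart a}, atomPolyF n b


/-!
Expand `β^k Q̄_a` into monomials `β^e x^m`. A term with `m = a` comes from an atom `Ā_b` with
`b` dominating `a` and a Lascoux filling of shape `b` and weight `a`; since the weight of a
filling dominates its shape, `b = a`, and then the only such filling is the superstandard one
(box `(i, j)` filled with `{i}`), which contributes `β^0 x^a`. Every other monomial `x^m` has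
`m` strictly dominating `a` with no larger part. This strict order has finite lower sets, so
it is well founded, and the `Q̄_a` form a unitriangular `ℤ[β]`-basis of `ℤ[β][x_1, …, x_n]`;
multiplying by the `ℤ`-basis `β^k` of `ℤ[β]` gives the statement.
-/

namespace Module.Basis

variable {ι R M : Type*} [Ring R] [AddCommGroup M] [Module R M] (b : Basis ι R M)
  {v : ι → M} {r : ι → ι → Prop}

theorem linearIndependent_of_unitriangular [IsStrictOrder ι r] (hdiag : ∀ i, b.repr (v i) i = 1)
    (hlower : ∀ i j, b.repr (v i) j ≠ 0 → j ≠ i → r j i) : LinearIndependent R v := by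
  classical
  rw [linearIndependent_iff]
  intro c hc
  by_contra hne
  obtain ⟨j₀, hj₀⟩ := Finsupp.support_nonempty_iff.mpr hne
  obtain ⟨⟨j, hj⟩, -, hmax⟩ :=
    (c.support.finite_toSet.wellFoundedOn (r := Function.swap r)).has_min Set.univ
      ⟨⟨j₀, hj₀⟩, trivial⟩
  have hcoeff : b.repr (Finsupp.linearCombination R v c) j = c j := by
    rw [Finsupp.linearCombination_apply, Finsupp.sum, map_sum, Finset.sum_apply',
      Finset.sum_eq_single_of_mem j hj]
    · simp [hdiag]
    · intro k hk hkj
      by_contra h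
      rw [map_smul, Finsupp.smul_apply] at h
      exact hmax ⟨k, hk⟩ trivial (hlower k j (right_ne_zero_of_smul h) (Ne.symm hkj))
  rw [hc, map_zero, Finsupp.zero_apply] at hcoeff
  exact Finsupp.mem_support_iff.mp hj hcoeff.symm

theorem span_eq_top_of_unitriangular (hr : WellFounded r) (hdiag : ∀ i, b.repr (v i) i = 1)
    (hlower : ∀ i j, b.repr (v i) j ≠ 0 → j ≠ i → r j i) :
    Submodule.span R (Set.range v) = ⊤ := by
  suffices h : ∀ i, b i ∈ Submodule.span R (Set.range v) by
    rw [eq_top_iff, ← b.span_eq, Submodule.span_le]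
    rintro _ ⟨i, rfl⟩
    exact h i
  intro i
  induction i using hr.induction with
  | _ i ih =>
  have hvi : v i = b i + Finsupp.linearCombination R b ((b.repr (v i)).erase i) := by
    conv_lhs => rw [← b.linearCombination_repr (v i), ← Finsupp.single_add_erase i (b.repr (v i))]
    simp [hdiag]
  have hrest : Finsupp.linearCombination R b ((b.repr (v i)).erase i) ∈
      Submodule.span R (Set.range v) := by
    refine Submodule.span_le.mpr ?_ ((Finsupp.mem_span_image_iff_linearCombination R).mpr
      ⟨_, (Finsupp.mem_supported R _).mpr subset_rfl, rfl⟩)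
    rintro _ ⟨j, hj, rfl⟩
    have hji : j ≠ i := fun h => by simp [h] at hj
    rw [Finset.mem_coe, Finsupp.mem_support_iff, Finsupp.erase_ne hji] at hj
    exact ih j (hlower i j hj hji)
  rw [eq_sub_of_add_eq hvi.symm]
  exact Submodule.sub_mem _ (Submodule.subset_span ⟨i, rfl⟩) hrest

noncomputable def ofUnitriangular [IsTrans ι r] (hr : WellFounded r)
    (hdiag : ∀ i, b.repr (v i) i = 1) (hlower : ∀ i j, b.repr (v i) j ≠ 0 → j ≠ i → r j i) :
    Basis ι R M :=
  haveI : IsStrictOrder ι r := { hr.irrefl with }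
  .mk (b.linearIndependent_of_unitriangular hdiag hlower)
    (b.span_eq_top_of_unitriangular hr hdiag hlower).ge

@[simp]
theorem coe_ofUnitriangular [IsTrans ι r] (hr : WellFounded r) (hdiag : ∀ i, b.repr (v i) i = 1)
    (hlower : ∀ i j, b.repr (v i) j ≠ 0 → j ≠ i → r j i) :
    ⇑(b.ofUnitriangular hr hdiag hlower) = v :=
  coe_mk _ _

end Module.Basis

theorem wellFounded_of_finite_setOf_rel {α : Type*} {r : α → α → Prop} [IsStrictOrder α r]
    (h : ∀ a, {b | r b a}.Finite) : WellFounded r :=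
  ⟨fun a => (Set.WellFoundedOn.acc_iff_wellFoundedOn (r := r)).out 0 2 |>.mpr
    (by simpa only [Relation.transGen_eq_self] using (h a).wellFoundedOn)⟩

theorem List.sum_take_eq_sum_range_getD (l : List ℕ) (V : ℕ) :
    (l.take V).sum = ∑ i ∈ Finset.range V, l.getD i 0 := by
  induction V with
  | zero => simp
  | succ V ih =>
    rw [List.take_add_one, List.sum_append, ih, Finset.sum_range_succ, List.getD_eq_getElem?_getD]
    cases l[V]? <;> simp

theorem List.finite_setOf_length_eq_forall_le (n B : ℕ) :
    {l : List ℕ | l.length = n ∧ ∀ x ∈ l, x ≤ B}.Finite := by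
  refine ((List.finite_length_eq (Fin (B + 1)) n).image (List.map Fin.val)).subset ?_
  rintro l ⟨hl, hB⟩
  lift l to List (Fin (B + 1)) using fun x hx => Nat.lt_succ_of_le (hB x hx)
  exact ⟨l, by simpa using hl, rfl⟩

theorem mem_of_posPart_eq {a b : List ℕ} (h : posPart b = posPart a) {x : ℕ} (hx : x ∈ b)
    (hx0 : x ≠ 0) : x ∈ a := by
  have : x ∈ posPart b := List.mem_filter.mpr ⟨hx, by simpa using hx0⟩
  rw [h] at this
  exact (List.mem_filter.mp this).1

namespace Dominates

theorem refl (a : List ℕ) : Dominates a a := ⟨rfl, fun _ => le_rfl⟩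

theorem trans {a b c : List ℕ} (hab : Dominates a b) (hbc : Dominates b c) : Dominates a c :=
  ⟨hab.1.trans hbc.1, fun i => (hbc.2 i).trans (hab.2 i)⟩

theorem antisymm {a b : List ℕ} (hab : Dominates a b) (hba : Dominates b a) : a = b :=
  List.eq_of_sum_take_eq hab.1 fun i _ => le_antisymm (hba.2 i) (hab.2 i)

end Dominates

/-- Stands in for the paper's total order `≺`: the last clause says that the largest part of `m`
is at most the largest part of `a`. -/
def StrictDom (m a : List ℕ) : Prop :=
  m ≠ a ∧ Dominates m a ∧ ∀ B, (∀ y ∈ a, y ≤ B) → ∀ x ∈ m, x ≤ B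

instance : IsStrictOrder (List ℕ) StrictDom where
  irrefl _ h := h.1 rfl
  trans _ _ _ h h' := ⟨fun e => h'.1 (h'.2.1.antisymm (e ▸ h.2.1)), h.2.1.trans h'.2.1,
    fun B hB => h.2.2 B (h'.2.2 B hB)⟩

instance (n : ℕ) : IsTrans {l : List ℕ // l.length = n} (InvImage StrictDom Subtype.val) :=
  ⟨fun _ _ _ => _root_.trans (r := StrictDom)⟩

theorem wellFounded_strictDom : WellFounded StrictDom :=
  wellFounded_of_finite_setOf_rel fun a =>
    (List.finite_setOf_length_eq_forall_le a.length a.sum).subset fun _ hm =>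
      ⟨hm.2.1.1, hm.2.2 _ fun _ => List.le_sum_of_mem⟩

theorem finite_setOf_dominates_posPart_eq (a : List ℕ) :
    {b | Dominates b a ∧ posPart b = posPart a}.Finite := by
  refine (List.finite_setOf_length_eq_forall_le a.length a.sum).subset
    fun b hb => ⟨hb.1.1, fun x hx => ?_⟩
  rcases Nat.eq_zero_or_pos x with rfl | hx0
  · exact Nat.zero_le _
  · exact List.le_sum_of_mem (mem_of_posPart_eq hb.2 hx hx0.ne')

open Finset

section Skyline

variable (b : List ℕ)

theorem mem_skyline {p : ℕ × ℕ} : p ∈ skyline b ↔ SBox b p.1 p.2 := by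
  obtain ⟨i, j⟩ := p
  simp only [skyline, SBox, shapeLen, mem_biUnion, mem_range, mem_image, Prod.mk.injEq]
  constructor
  · rintro ⟨i, hi, j, hj, rfl, rfl⟩
    simp only [Nat.add_sub_cancel]
    omega
  · rintro ⟨h1, h2, h3, h4⟩
    exact ⟨i - 1, by omega, j - 1, by omega, by omega, by omega⟩

theorem shapeLen_le {B : ℕ} (hB : ∀ y ∈ b, y ≤ B) (i : ℕ) : shapeLen b i ≤ B := by
  rw [shapeLen, List.getD_eq_getElem?_getD]
  cases h : b[i - 1]? with
  | none => exact Nat.zero_le _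
  | some y => exact hB y (List.mem_of_getElem? h)

theorem card_skyline_filter_fst_eq (i : ℕ) : #{p ∈ skyline b | p.1 = i + 1} = b.getD i 0 := by
  have : {p ∈ skyline b | p.1 = i + 1} =
      (Icc 1 (b.getD i 0)).map ⟨(i + 1, ·), Prod.mk_right_injective _⟩ := by
    ext ⟨r, j⟩
    simp only [mem_filter, mem_skyline, SBox, shapeLen, mem_map, mem_Icc,
      Function.Embedding.coeFn_mk, Prod.mk.injEq]
    constructor
    · rintro ⟨⟨-, -, h3, h4⟩, rfl⟩
      exact ⟨j, ⟨h3, by simpa using h4⟩, rfl, rfl⟩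
    · rintro ⟨j, hj, rfl, rfl⟩
      refine ⟨⟨by omega, ?_, hj.1, by simpa using hj.2⟩, rfl⟩
      by_contra h
      rw [List.getD_eq_default _ _ (by omega)] at hj
      omega
  rw [this, card_map, Nat.card_Icc, Nat.add_sub_cancel]

theorem sum_take_eq_card_skyline_filter (V : ℕ) :
    (b.take V).sum = #{p ∈ skyline b | p.1 ≤ V} := by
  have hrow : ∀ p ∈ skyline b, 1 ≤ p.1 := fun p hp => ((mem_skyline b).mp hp).1
  rw [card_eq_sum_card_fiberwise (f := fun p => p.1 - 1) (t := range V),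
    List.sum_take_eq_sum_range_getD]
  · refine sum_congr rfl fun i hi => ?_
    rw [← card_skyline_filter_fst_eq, filter_filter]
    congr 1
    refine filter_congr fun p hp => ?_
    have := hrow p hp
    have := mem_range.mp hi
    omega
  · intro p hp
    rw [mem_coe, mem_filter] at hp
    have := hrow p hp.1
    exact mem_range.mpr (show p.1 - 1 < V by omega)

theorem card_skyline : #(skyline b) = b.sum := by
  have h := sum_take_eq_card_skyline_filter b b.length
  rw [List.take_length, filter_true_of_mem fun p hp => ((mem_skyline b).mp hp).2.1] at h
  exact h.symm

end Skyline

theorem sum_range_wtF_eq (b : List ℕ) (F : SVF) (V : ℕ) :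
    ∑ i ∈ range V, wtF b F (i + 1) = ∑ p ∈ skyline b, #{i ∈ range V | i + 1 ∈ F p.1 p.2} := by
  simp only [wtF, card_filter]
  exact sum_comm

namespace LASSF

variable {b : List ℕ} {F : SVF} (hF : LASSF b F)
include hF

theorem nonempty_iff {i j : ℕ} : (F i j).Nonempty ↔ SBox b i j := hF.1.1 i j

theorem pos {i j v : ℕ} (hv : v ∈ F i j) : 0 < v := hF.1.2.1 i j v hv

theorem le_row {i j v : ℕ} (hv : v ∈ F i j) : v ≤ i := by
  induction j generalizing v with
  | zero => exact absurd (hF.nonempty_iff.mp ⟨v, hv⟩).2.2.1 (by omega)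
  | succ j ih =>
    have hbox := hF.nonempty_iff.mp ⟨v, hv⟩
    have hv_le : v ≤ anc F i (j + 1) := le_sup (f := id) hv
    rcases Nat.eq_zero_or_pos j with rfl | hj
    · exact hv_le.trans_eq (hF.2 i hbox)
    · have hbox' : SBox b i j := ⟨hbox.1, hbox.2.1, hj, by have := hbox.2.2.2; omega⟩
      obtain ⟨w, hw⟩ := hF.nonempty_iff.mpr hbox'
      calc v ≤ anc F i (j + 1) := hv_le
        _ ≤ infv F i j := hF.1.2.2.2.1 i j hbox' hbox
        _ ≤ w := Nat.sInf_le hw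
        _ ≤ i := ih hw

theorem wtF_eq_zero {v : ℕ} (hv : b.length < v) : wtF b F v = 0 := by
  refine card_eq_zero.mpr (filter_eq_empty_iff.mpr fun p hp hvp => ?_)
  have := hF.le_row hvp
  have := ((mem_skyline b).mp hp).2.1
  omega

/-- Boxes containing `v` lie in distinct columns. -/
theorem wtF_le {B : ℕ} (hB : ∀ y ∈ b, y ≤ B) (v : ℕ) : wtF b F v ≤ B := by
  calc wtF b F v ≤ #(Icc 1 B) := by
        refine card_le_card_of_injOn Prod.snd (fun p hp => ?_) fun p hp q hq hpq => ?_
        · obtain ⟨-, -, h1, h2⟩ := (mem_skyline b).mp (mem_filter.mp hp).1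
          exact mem_Icc.mpr ⟨h1, h2.trans (shapeLen_le b hB _)⟩
        · by_contra hne
          exact hF.1.2.2.1 p.2 p.1 q.1 (fun h => hne (Prod.ext h hpq)) v (mem_filter.mp hp).2
            (hpq ▸ (mem_filter.mp hq).2)
    _ = B := by simp

theorem ite_le_card_filter {p : ℕ × ℕ} (hp : p ∈ skyline b) (V : ℕ) :
    (if p.1 ≤ V then 1 else 0) ≤ #{i ∈ range V | i + 1 ∈ F p.1 p.2} := by
  split_ifs with hpV
  · obtain ⟨v, hv⟩ := hF.nonempty_iff.mpr ((mem_skyline b).mp hp)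
    have := hF.pos hv
    have := hF.le_row hv
    refine card_pos.mpr ⟨v - 1, mem_filter.mpr ⟨mem_range.mpr (by omega), ?_⟩⟩
    rwa [Nat.sub_add_cancel (by omega)]
  · exact Nat.zero_le _

theorem sum_take_le_sum_wtF (V : ℕ) : (b.take V).sum ≤ ∑ i ∈ range V, wtF b F (i + 1) := by
  rw [sum_take_eq_card_skyline_filter, card_filter, sum_range_wtF_eq]
  exact sum_le_sum fun p hp => hF.ite_le_card_filter hp V

theorem dominates_shape {m : List ℕ} (hm : m.length = b.length)
    (hw : ∀ i, m.getD i 0 = wtF b F (i + 1)) : Dominates m b :=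
  ⟨hm, fun V => by
    simpa only [List.sum_take_eq_sum_range_getD m, hw] using hF.sum_take_le_sum_wtF V⟩

end LASSF

def superstandard (b : List ℕ) : SVF := fun i j => if (i, j) ∈ skyline b then {i} else ∅

section Superstandard

variable (b : List ℕ)

theorem superstandard_of_mem {i j : ℕ} (h : (i, j) ∈ skyline b) : superstandard b i j = {i} :=
  if_pos h

theorem superstandard_of_not_mem {i j : ℕ} (h : (i, j) ∉ skyline b) :
    superstandard b i j = ∅ :=
  if_neg h

theorem mem_superstandard {i j v : ℕ} :
    v ∈ superstandard b i j ↔ (i, j) ∈ skyline b ∧ v = i := by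
  unfold superstandard
  split_ifs with h <;> simp [h]

theorem lassf_superstandard : LASSF b (superstandard b) := by
  have hanc : ∀ {i j}, SBox b i j → anc (superstandard b) i j = i := fun h => by
    simp [anc, superstandard_of_mem b ((mem_skyline b).mpr h)]
  have hinf : ∀ {i j}, SBox b i j → infv (superstandard b) i j = i := fun h => by
    simp [infv, superstandard_of_mem b ((mem_skyline b).mpr h)]
  refine ⟨⟨fun i j => ?_, fun i j v hv => ?_, fun j i i' hne v hv => ?_, fun i j h h' => ?_,
    fun i i' j hlt h h' h'' _ => ?_, fun i i' j hlt h h' h'' _ => ?_,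
    fun i j v h hv hne => ?_⟩, fun i h => hanc h⟩
  · simp only [Finset.Nonempty, mem_superstandard, exists_eq_right]
    exact mem_skyline b
  · obtain ⟨h, rfl⟩ := (mem_superstandard b).mp hv
    exact ((mem_skyline b).mp h).1
  · rw [mem_superstandard] at hv ⊢
    omega
  · rw [hanc h', hinf h]
  · rw [hanc h, hanc h', hanc h'']
    exact Or.inr ⟨le_rfl, hlt⟩
  · rw [hanc h, hanc h', hanc h'']
    exact Or.inl ⟨hlt, le_rfl⟩
  · exact absurd (((mem_superstandard b).mp hv).2.trans (hanc h).symm) hne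

theorem wtF_superstandard (i : ℕ) : wtF b (superstandard b) (i + 1) = b.getD i 0 := by
  rw [← card_skyline_filter_fst_eq, wtF]
  congr 1
  refine filter_congr fun p hp => ?_
  rw [superstandard_of_mem b hp, mem_singleton, eq_comm]

theorem sizeF_superstandard : sizeF b (superstandard b) = b.sum := by
  rw [sizeF, ← card_skyline, card_eq_sum_ones]
  exact sum_congr rfl fun p hp => by rw [superstandard_of_mem b hp, card_singleton]

end Superstandard

theorem LASSF.eq_superstandard {a : List ℕ} {F : SVF} (hF : LASSF a F)
    (hw : ∀ i, a.getD i 0 = wtF a F (i + 1)) : F = superstandard a := by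
  -- Equality in `sum_take_le_sum_wtF` for every `V` forces equality box by box.
  have hcount : ∀ V, ∀ p ∈ skyline a,
      (if p.1 ≤ V then 1 else 0) = #{i ∈ range V | i + 1 ∈ F p.1 p.2} := by
    intro V
    refine (sum_eq_sum_iff_of_le fun p hp => hF.ite_le_card_filter hp V).mp ?_
    rw [← card_filter, ← sum_take_eq_card_skyline_filter, List.sum_take_eq_sum_range_getD,
      ← sum_range_wtF_eq]
    simp only [hw]
  funext i j
  by_cases hp : (i, j) ∈ skyline a
  · rw [superstandard_of_mem a hp]
    refine (hF.nonempty_iff.mpr ((mem_skyline a).mp hp)).subset_singleton_iff.mp fun v hv => ?_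
    -- With `V = i - 1`: box `(i, j)` has no entry below `i`.
    have h0 := hcount (i - 1) _ hp
    have hv0 := hF.pos hv
    have hvi := hF.le_row hv
    have hi := ((mem_skyline a).mp hp).1
    rw [if_neg (show ¬ i ≤ i - 1 by omega), eq_comm, card_eq_zero, filter_eq_empty_iff] at h0
    have hge : ¬ v - 1 < i - 1 := fun hlt =>
      h0 (mem_range.mpr hlt) (by rwa [Nat.sub_add_cancel hv0])
    rw [mem_singleton]
    omega
  · rw [superstandard_of_not_mem a hp, ← not_nonempty_iff_eq_empty, hF.nonempty_iff]
    exact fun h => hp ((mem_skyline a).mpr h)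

theorem finite_setOf_lassf (b : List ℕ) : {F | LASSF b F}.Finite := by
  refine Set.Finite.of_finite_image (f := fun F (p : skyline b) => F p.1.1 p.1.2) ?_ ?_
  · refine (Set.Finite.pi (t := fun _ => ((range (b.length + 1)).powerset : Set (Finset ℕ)))
      fun _ => finite_toSet _).subset ?_
    rintro _ ⟨F, hF, rfl⟩ ⟨p, hp⟩ -
    simp only [coe_powerset, Set.mem_preimage, Set.mem_powerset_iff, coe_subset]
    intro v hv
    have := hF.le_row hv
    have := ((mem_skyline b).mp hp).2.1
    exact mem_range.mpr (by omega)
  · intro F hF G hG hFG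
    funext i j
    by_cases hp : (i, j) ∈ skyline b
    · exact congrFun hFG ⟨(i, j), hp⟩
    · have hF' := mt (LASSF.nonempty_iff hF).mp fun h => hp ((mem_skyline b).mpr h)
      have hG' := mt (LASSF.nonempty_iff hG).mp fun h => hp ((mem_skyline b).mpr h)
      rw [not_nonempty_iff_eq_empty] at hF' hG'
      rw [hF', hG']

noncomputable def weakCompositionEquiv (n : ℕ) : {l : List ℕ // l.length = n} ≃ (Fin n →₀ ℕ) where
  toFun l := Finsupp.equivFunOnFinite.symm fun i => l.1.getD i 0
  invFun m := ⟨List.ofFn m, List.length_ofFn⟩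
  left_inv l := by
    obtain ⟨l, rfl⟩ := l
    ext1
    simp
  right_inv m := by ext i; simp

open MvPolynomial

noncomputable def weightExponent (n : ℕ) (w : ℕ → ℕ) : Fin n →₀ ℕ :=
  Finsupp.equivFunOnFinite.symm fun i => w (i + 1)

theorem vmonoF_eq_monomial (n : ℕ) (w : ℕ → ℕ) :
    vmonoF n w = monomial (weightExponent n w) 1 := by
  rw [monomial_eq, C_1, one_mul, Finsupp.prod_fintype _ _ fun _ => pow_zero _]
  rfl

theorem LASSF.weightExponent_eq_iff {n : ℕ} {b : List ℕ} {F : SVF} (hF : LASSF b F)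
    (hb : b.length = n) (l : {l : List ℕ // l.length = n}) :
    weightExponent n (wtF b F) = weakCompositionEquiv n l ↔
      ∀ i, l.1.getD i 0 = wtF b F (i + 1) := by
  constructor
  · intro h i
    by_cases hi : i < n
    · exact (DFunLike.congr_fun h ⟨i, hi⟩).symm
    · rw [List.getD_eq_default _ _ (by omega), hF.wtF_eq_zero (by omega)]
  · intro h
    ext i
    exact (h i).symm

theorem coeff_quasiLascouxF (n : ℕ) (a : List ℕ) (m : Fin n →₀ ℕ) :
    coeff m (quasiLascouxF n a) = ∑ b ∈ (finite_setOf_dominates_posPart_eq a).toFinset,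
      ∑ F ∈ (finite_setOf_lassf b).toFinset,
        if weightExponent n (wtF b F) = m then Polynomial.X ^ (sizeF b F - b.sum) else 0 := by
  rw [quasiLascouxF, finsum_mem_eq_finite_toFinset_sum _ (finite_setOf_dominates_posPart_eq a),
    coeff_sum]
  refine sum_congr rfl fun b _ => ?_
  rw [atomPolyF, finsum_mem_eq_finite_toFinset_sum _ (finite_setOf_lassf b), coeff_sum]
  refine sum_congr rfl fun F _ => ?_
  rw [vmonoF_eq_monomial, coeff_C_mul, coeff_monomial, mul_ite, mul_one, mul_zero]

theorem coeff_weakCompositionEquiv_quasiLascouxF {n : ℕ} (a : {l : List ℕ // l.length = n}) :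
    coeff (weakCompositionEquiv n a) (quasiLascouxF n a.1) = 1 := by
  have ha : a.1 ∈ (finite_setOf_dominates_posPart_eq a.1).toFinset :=
    (Set.Finite.mem_toFinset _).mpr ⟨Dominates.refl _, rfl⟩
  have hF₀ : superstandard a.1 ∈ (finite_setOf_lassf a.1).toFinset :=
    (Set.Finite.mem_toFinset _).mpr (lassf_superstandard a.1)
  rw [coeff_quasiLascouxF, sum_eq_single_of_mem a.1 ha, sum_eq_single_of_mem _ hF₀, if_pos,
    sizeF_superstandard, Nat.sub_self, pow_zero]
  · exact ((lassf_superstandard a.1).weightExponent_eq_iff a.2 a).mpr fun i =>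
      (wtF_superstandard a.1 i).symm
  · intro F hF hne
    rw [Set.Finite.mem_toFinset] at hF
    rw [if_neg fun h => hne (hF.eq_superstandard ((hF.weightExponent_eq_iff a.2 a).mp h))]
  · intro b hb hne
    rw [Set.Finite.mem_toFinset] at hb
    refine sum_eq_zero fun F hF => if_neg fun h => hne ?_
    rw [Set.Finite.mem_toFinset] at hF
    have hlen : b.length = n := hb.1.1.trans a.2
    exact hb.1.antisymm
      (hF.dominates_shape (a.2.trans hlen.symm) ((hF.weightExponent_eq_iff hlen a).mp h))

theorem strictDom_of_coeff_quasiLascouxF_ne_zero {n : ℕ} {a m : {l : List ℕ // l.length = n}}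
    (h : coeff (weakCompositionEquiv n m) (quasiLascouxF n a.1) ≠ 0) (hne : m ≠ a) :
    StrictDom m.1 a.1 := by
  rw [coeff_quasiLascouxF] at h
  obtain ⟨b, hb, h⟩ := exists_ne_zero_of_sum_ne_zero h
  obtain ⟨F, hF, h⟩ := exists_ne_zero_of_sum_ne_zero h
  rw [Set.Finite.mem_toFinset] at hb hF
  have hlen : b.length = n := hb.1.1.trans a.2
  have hw := (hF.weightExponent_eq_iff hlen m).mp (ite_ne_right_iff.mp h).1
  refine ⟨fun h => hne (Subtype.ext h), (hF.dominates_shape (m.2.trans hlen.symm) hw).trans hb.1,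
    fun B hB x hx => ?_⟩
  obtain ⟨i, hi, rfl⟩ := List.getElem_of_mem hx
  rw [← List.getD_eq_getElem _ 0, hw]
  refine hF.wtF_le (fun y hy => ?_) _
  rcases Nat.eq_zero_or_pos y with rfl | hy0
  · exact Nat.zero_le _
  · exact hB y (mem_of_posPart_eq hb.2 hy hy0.ne')

noncomputable def quasiLascouxBasis (n : ℕ) :
    Module.Basis {l : List ℕ // l.length = n} (Polynomial ℤ)
      (MvPolynomial (Fin n) (Polynomial ℤ)) :=
  ((basisMonomials (Fin n) (Polynomial ℤ)).reindex (weakCompositionEquiv n).symm).ofUnitriangular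
    (v := fun a => quasiLascouxF n a.1) (InvImage.wf _ wellFounded_strictDom)
    coeff_weakCompositionEquiv_quasiLascouxF
    fun _ _ h hne => strictDom_of_coeff_quasiLascouxF_ne_zero h hne

theorem coe_quasiLascouxBasis (n : ℕ) : ⇑(quasiLascouxBasis n) = fun a => quasiLascouxF n a.1 :=
  Module.Basis.coe_ofUnitriangular ..

theorem stmt13 (n : ℕ) :
    (∀ f : MvPolynomial (Fin n) (Polynomial ℤ),
        f ∈ Submodule.span ℤ (Set.range (fun p : ℕ × {l : List ℕ // l.length = n} =>
          MvPolynomial.C (Polynomial.X ^ p.1) * quasiLascouxF n p.2.1))) ∧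
    LinearIndependent ℤ (fun p : ℕ × {l : List ℕ // l.length = n} =>
      MvPolynomial.C (Polynomial.X ^ p.1) * quasiLascouxF n p.2.1) := by
  set B := (Polynomial.basisMonomials ℤ).smulTower (quasiLascouxBasis n)
  have hB : ⇑B = fun p : ℕ × {l : List ℕ // l.length = n} =>
      MvPolynomial.C (Polynomial.X ^ p.1) * quasiLascouxF n p.2.1 := by
    ext1 p
    simp [B, coe_quasiLascouxBasis, smul_eq_C_mul, Polynomial.X_pow_eq_monomial]
  rw [← hB]
  exact ⟨B.mem_span, B.linearIndependent⟩
end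

section
/- Threading is preserved by the nearest-skyline algorithm: if K is a Kohnert diagram and K⁺ is obtained from K by a single box-raising step of the nearest-skyline algorithm, then K and K⁺ have the same threads (the same sets of boxes per thread, identified by column positions, and the leftmost box of each thread is in the same location). -/
def KMove (K K' : Finset (ℕ × ℕ)) : Prop :=
  ∃ r c r', (r, c) ∈ K ∧ (∀ c', (r, c') ∈ K → c' ≤ c) ∧
    1 ≤ r' ∧ r' < r ∧ (r', c) ∉ K ∧ (∀ s, r' < s → s < r → (s, c) ∈ K) ∧
    K' = insert (r', c) (K.erase (r, c))
def NStep (K K' : Finset (ℕ × ℕ)) : Prop :=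
  ∃ r c, (r, c) ∈ K ∧ 2 ≤ c ∧ (r, c - 1) ∉ K ∧
    (∀ r₂ c₂, (r₂, c₂) ∈ K → 2 ≤ c₂ → (r₂, c₂ - 1) ∉ K → r₂ < r ∨ (r₂ = r ∧ c ≤ c₂)) ∧
    ∃ r'', r < r'' ∧ (r'', c) ∉ K ∧ (∀ s, r < s → s < r'' → (s, c) ∈ K) ∧
      K' = insert (r'', c) (K.erase (r, c))

def IsSkyline (K : Finset (ℕ × ℕ)) : Prop :=
  ∀ p ∈ K, 2 ≤ p.2 → (p.1, p.2 - 1) ∈ K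
def IsStart (K : Set (ℕ × ℕ)) (p : ℕ × ℕ) : Prop :=
  p ∈ K ∧ p.2 = 1 ∧ ∀ r, (r, 1) ∈ K → p.1 ≤ r

def ThreadNext (K : Set (ℕ × ℕ)) (p q : ℕ × ℕ) : Prop :=
  q ∈ K ∧ q.2 = p.2 + 1 ∧ q.1 ≤ p.1 ∧ ∀ r, (r, p.2 + 1) ∈ K → r ≤ p.1 → r ≤ q.1

def firstThread (K : Set (ℕ × ℕ)) : Set (ℕ × ℕ) :=
  {x | ∃ p, IsStart K p ∧ Relation.ReflTransGen (ThreadNext K) p x}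

def peel (K : Set (ℕ × ℕ)) : ℕ → Set (ℕ × ℕ)
  | 0 => K
  | i + 1 => peel K i \ firstThread (peel K i)

def threadAt (K : Set (ℕ × ℕ)) (i : ℕ) : Set (ℕ × ℕ) := firstThread (peel K i)

open Relation

section Generic

variable {K : Set (ℕ × ℕ)}

private lemma mem_eta {q : ℕ × ℕ} (h : q ∈ K) : (q.1, q.2) ∈ K := by simpa using h

private lemma tn_unique {p q q' : ℕ × ℕ} (h : ThreadNext K p q) (h' : ThreadNext K p q') :
    q = q' := by
  obtain ⟨hq, hc, hle, hmax⟩ := h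
  obtain ⟨hq', hc', hle', hmax'⟩ := h'
  have h1 : (q.1, p.2 + 1) ∈ K := by rw [← hc]; exact mem_eta hq
  have h1' : (q'.1, p.2 + 1) ∈ K := by rw [← hc']; exact mem_eta hq'
  have e1 := hmax q'.1 h1' hle'
  have e2 := hmax' q.1 h1 hle
  exact Prod.ext (le_antisymm e2 e1) (hc.trans hc'.symm)

private lemma rtg_comparable {α : Type*} {r : α → α → Prop}
    (hru : ∀ a b c, r a b → r a c → b = c) {a b c : α}
    (h1 : ReflTransGen r a b) (h2 : ReflTransGen r a c) :
    ReflTransGen r b c ∨ ReflTransGen r c b := by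
  induction h1 with
  | refl => exact Or.inl h2
  | tail _ hbc ih =>
    rcases ih with h | h
    · rcases h.cases_head with rfl | ⟨d, hd, hdc⟩
      · exact Or.inr (ReflTransGen.single hbc)
      · obtain rfl : d = _ := hru _ _ _ hd hbc
        exact Or.inl hdc
    · exact Or.inr (h.tail hbc)

private lemma rtg_mem {p x : ℕ × ℕ} (hp : p ∈ K) (h : ReflTransGen (ThreadNext K) p x) :
    x ∈ K := by
  induction h with
  | refl => exact hp
  | tail _ h _ => exact h.1

private lemma rtg_col_le {p x : ℕ × ℕ} (h : ReflTransGen (ThreadNext K) p x) : p.2 ≤ x.2 := by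
  induction h with
  | refl => exact le_refl _
  | tail _ h ih => rw [h.2.1]; omega

private lemma rtg_col_eq {p x : ℕ × ℕ} (h : ReflTransGen (ThreadNext K) p x)
    (hc : p.2 = x.2) : p = x := by
  rcases h.cases_tail with rfl | ⟨z, hz, hstep⟩
  · rfl
  · have := rtg_col_le hz
    have := hstep.2.1
    omega

private lemma start_unique {p q : ℕ × ℕ} (hp : IsStart K p) (hq : IsStart K q) : p = q := by
  obtain ⟨hpK, hp1, hpm⟩ := hp
  obtain ⟨hqK, hq1, hqm⟩ := hq
  have h1 : (q.1, 1) ∈ K := by rw [← hq1]; exact mem_eta hqK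
  have h2 : (p.1, 1) ∈ K := by rw [← hp1]; exact mem_eta hpK
  exact Prod.ext (le_antisymm (hpm _ h1) (hqm _ h2)) (hp1.trans hq1.symm)

private lemma start_exists (h : ∃ s, (s, 1) ∈ K) : ∃ p, IsStart K p := by
  classical
  obtain ⟨s, hs⟩ := h
  have hn : ∃ n, (n, 1) ∈ K := ⟨s, hs⟩
  exact ⟨(Nat.find hn, 1), Nat.find_spec hn, rfl, fun r hr => Nat.find_le hr⟩

private lemma start_mem_ft {p : ℕ × ℕ} (hp : IsStart K p) : p ∈ firstThread K :=
  ⟨p, hp, ReflTransGen.refl⟩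

private lemma ft_subset : firstThread K ⊆ K := by
  rintro x ⟨p, hp, hrtg⟩
  exact rtg_mem hp.1 hrtg

private lemma ft_tail {x y : ℕ × ℕ} (hx : x ∈ firstThread K) (h : ThreadNext K x y) :
    y ∈ firstThread K := by
  obtain ⟨p, hp, hrtg⟩ := hx
  exact ⟨p, hp, hrtg.tail h⟩

private lemma ft_right {t j : ℕ} (hx : (t, j) ∈ firstThread K) (h : (t, j + 1) ∈ K) :
    (t, j + 1) ∈ firstThread K :=
  ft_tail hx ⟨h, rfl, le_refl _, fun r _ hr => hr⟩

private lemma ft_pred {x : ℕ × ℕ} (hx : x ∈ firstThread K) (hc : x.2 ≠ 1) :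
    ∃ z ∈ firstThread K, ThreadNext K z x := by
  obtain ⟨p, hp, hrtg⟩ := hx
  rcases hrtg.cases_tail with rfl | ⟨z, hz, hstep⟩
  · exact absurd hp.2.1 hc
  · exact ⟨z, ⟨p, hp, hz⟩, hstep⟩

private lemma ft_col_unique {x y : ℕ × ℕ} (hx : x ∈ firstThread K) (hy : y ∈ firstThread K)
    (h : x.2 = y.2) : x = y := by
  obtain ⟨p, hp, hx⟩ := hx
  obtain ⟨p', hp', hy⟩ := hy
  obtain rfl : p = p' := start_unique hp hp'
  rcases rtg_comparable (r := ThreadNext K) (fun _ _ _ h1 h2 => tn_unique h1 h2) hx hy with h' | h'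
  · exact rtg_col_eq h' h
  · exact (rtg_col_eq h' h.symm).symm

private lemma ft_col1 {x : ℕ × ℕ} (hx : x ∈ firstThread K) (h : x.2 = 1) : IsStart K x := by
  obtain ⟨p, hp, hrtg⟩ := hx
  have : p = x := rtg_col_eq hrtg (hp.2.1.trans h.symm)
  exact this ▸ hp

end Generic

structure QD (A B : Set (ℕ × ℕ)) (g c g' : ℕ) : Prop where
  hc : 2 ≤ c
  hgg : g < g'
  hgA : (g, c) ∈ A
  hg'A : (g', c) ∉ A
  hleft : (g, c - 1) ∉ A
  p3 : ∀ p, g < p → p < g' → (p, c - 1) ∈ A → (p, c) ∈ A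
  p6 : ∀ t, g < t → t ≤ g' → (t, c) ∉ A → (t, c + 1) ∉ A
  hB : B = (A \ {(g, c)}) ∪ {(g', c)}

def Rel' (A B : Set (ℕ × ℕ)) : Prop := A = B ∨ ∃ g c g', QD A B g c g'

section QDlemmas

variable {A B : Set (ℕ × ℕ)} {g c g' : ℕ} (q : QD A B g c g')

include q

private lemma memB_iff (w : ℕ × ℕ) : w ∈ B ↔ (w ∈ A ∧ w ≠ (g, c)) ∨ w = (g', c) := by
  rw [q.hB]
  simp only [Set.mem_union, Set.mem_diff, Set.mem_singleton_iff]
  try tauto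

private lemma memB_col {s j : ℕ} (hj : j ≠ c) : (s, j) ∈ B ↔ (s, j) ∈ A := by
  rw [memB_iff q]
  constructor
  · rintro (⟨h, _⟩ | h)
    · exact h
    · exact absurd (congrArg Prod.snd h) hj
  · intro h
    exact Or.inl ⟨h, fun he => hj (congrArg Prod.snd he)⟩

private lemma memB_colc {s : ℕ} : (s, c) ∈ B ↔ ((s, c) ∈ A ∧ s ≠ g) ∨ s = g' := by
  rw [memB_iff q]
  constructor
  · rintro (⟨h, hne⟩ | h)
    · exact Or.inl ⟨h, fun he => hne (by rw [he])⟩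
    · exact Or.inr (congrArg Prod.fst h)
  · rintro (⟨h, hne⟩ | rfl)
    · exact Or.inl ⟨h, fun he => hne (congrArg Prod.fst he)⟩
    · exact Or.inr rfl

private lemma start_iff {p : ℕ × ℕ} : IsStart A p ↔ IsStart B p := by
  have hcol : ∀ s : ℕ, ((s, 1) ∈ A ↔ (s, 1) ∈ B) := fun s => (memB_col q (by have := q.hc; omega)).symm
  constructor
  · rintro ⟨hp, h1, hm⟩
    refine ⟨?_, h1, fun r hr => hm r ((hcol r).2 hr)⟩
    have := (hcol p.1).1 (by rw [← h1]; exact mem_eta hp)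
    rw [← h1] at this; simpa using this
  · rintro ⟨hp, h1, hm⟩
    refine ⟨?_, h1, fun r hr => hm r ((hcol r).1 hr)⟩
    have := (hcol p.1).2 (by rw [← h1]; exact mem_eta hp)
    rw [← h1] at this; simpa using this

end QDlemmas

section Sim

variable {A B : Set (ℕ × ℕ)} {g c g' : ℕ}

private lemma M1 (q : QD A B g c g') {p₀ x : ℕ × ℕ}
    (hp₀ : IsStart A p₀) (h : ReflTransGen (ThreadNext A) p₀ x) :
    (x ∈ B ∧ ReflTransGen (ThreadNext B) p₀ x) ∨
    (x.2 = c ∧ g ≤ x.1 ∧ x.1 < g' ∧ (∀ t, x.1 < t → t ≤ g' → (t, c) ∉ A) ∧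
      ReflTransGen (ThreadNext B) p₀ (g', c)) := by
  induction h with
  | refl =>
    left
    refine ⟨?_, ReflTransGen.refl⟩
    have h1 : (p₀.1, p₀.2) ∈ A := mem_eta hp₀.1
    rw [hp₀.2.1] at h1
    have h2 : (p₀.1, 1) ∈ B := (memB_col q (by have := q.hc; omega)).2 h1
    have he : p₀ = (p₀.1, 1) := Prod.ext rfl hp₀.2.1
    rw [he]; exact h2
  | @tail z y hxy hstep ih =>
    obtain ⟨hyA, hyc, hyle, hymax⟩ := hstep
    obtain ⟨x1, x2⟩ := z
    obtain ⟨y1, y2⟩ := y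
    have hy2 : y2 = x2 + 1 := hyc
    subst hy2
    have hxA : (x1, x2) ∈ A := rtg_mem hp₀.1 hxy
    rcases ih with ⟨hxB, hrtgB⟩ | ⟨hxc, hgu, hug, hdiv, hrtgB⟩
    · by_cases hcol : x2 + 1 = c
      · subst hcol
        rcases Nat.lt_trichotomy x1 g with he | he | he
        · -- entry below g : sync
          left
          have hyB : ((y1, x2 + 1) : ℕ × ℕ) ∈ B :=
            (memB_colc q).2 (Or.inl ⟨hyA, by omega⟩)
          refine ⟨hyB, hrtgB.tail ⟨hyB, rfl, hyle, ?_⟩⟩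
          intro r hrB hrle
          rcases (memB_colc q).1 hrB with ⟨hrA, _⟩ | rfl
          · exact hymax r hrA hrle
          · have := q.hgg; omega
        · -- entry exactly at g : impossible
          exfalso
          apply q.hleft
          have h2 : x2 + 1 - 1 = x2 := rfl
          rw [h2, ← he]
          exact hxA
        · -- entry above g
          by_cases he2 : x1 < g'
          · -- g < x1 < g' : P3 forces same pick
            have hx1A : (x1, x2 + 1) ∈ A := by
              apply q.p3 x1 he he2
              have h2 : x2 + 1 - 1 = x2 := rfl
              rw [h2]; exact hxA
            have hy1 : y1 = x1 := le_antisymm hyle (hymax x1 hx1A (le_refl _))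
            subst hy1
            left
            have hyB : ((y1, x2 + 1) : ℕ × ℕ) ∈ B :=
              (memB_colc q).2 (Or.inl ⟨hyA, by omega⟩)
            refine ⟨hyB, hrtgB.tail ⟨hyB, rfl, le_refl _, ?_⟩⟩
            intro r hrB hrle
            rcases (memB_colc q).1 hrB with ⟨hrA, _⟩ | rfl
            · exact hymax r hrA hrle
            · omega
          · -- x1 ≥ g'
            by_cases hT : ∃ s, g' < s ∧ s ≤ x1 ∧ (s, x2 + 1) ∈ A
            · obtain ⟨s, hs1, hs2, hs3⟩ := hT
              have hsy : s ≤ y1 := hymax s hs3 hs2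
              left
              have hyB : ((y1, x2 + 1) : ℕ × ℕ) ∈ B :=
                (memB_colc q).2 (Or.inl ⟨hyA, by have := q.hgg; omega⟩)
              refine ⟨hyB, hrtgB.tail ⟨hyB, rfl, hyle, ?_⟩⟩
              intro r hrB hrle
              rcases (memB_colc q).1 hrB with ⟨hrA, _⟩ | rfl
              · exact hymax r hrA hrle
              · omega
            · push_neg at hT
              have hy1ne : y1 ≠ g' := fun h => q.hg'A (h ▸ hyA)
              have hy1lt : y1 < g' := by
                rcases lt_or_ge y1 g' with h | h
                · exact h
                · exact absurd hyA (hT y1 (by omega) hyle)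
              have hgy1 : g ≤ y1 := hymax g q.hgA (by have := q.hgg; omega)
              have hstepB : ThreadNext B (x1, x2) (g', x2 + 1) := by
                refine ⟨(memB_colc q).2 (Or.inr rfl), rfl, (by have := q.hgg; omega : g' ≤ x1), ?_⟩
                intro r hrB hrle
                rcases (memB_colc q).1 hrB with ⟨hrA, _⟩ | rfl
                · by_contra hgt
                  push_neg at hgt
                  exact hT r hgt hrle hrA
                · exact le_refl _
              right
              refine ⟨rfl, hgy1, hy1lt, ?_, hrtgB.tail hstepB⟩
              intro t ht1 ht2 htA
              have := hymax t htA (by omega)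
              omega
      · -- column ≠ c : plain sync step
        left
        have hyB : ((y1, x2 + 1) : ℕ × ℕ) ∈ B := (memB_col q hcol).2 hyA
        exact ⟨hyB, hrtgB.tail ⟨hyB, rfl, hyle,
          fun r hrB hrle => hymax r ((memB_col q hcol).1 hrB) hrle⟩⟩
    · -- diverged : resynchronize at column c+1
      have hx2 : x2 = c := hxc
      subst hx2
      left
      have hyB : ((y1, x2 + 1) : ℕ × ℕ) ∈ B := (memB_col q (by omega)).2 hyA
      have hstepB : ThreadNext B (g', x2) (y1, x2 + 1) := by
        refine ⟨hyB, rfl, by omega, ?_⟩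
        intro r hrB hrle
        have hrA : (r, x2 + 1) ∈ A := (memB_col q (by omega)).1 hrB
        rcases le_or_gt r x1 with h | h
        · exact hymax r hrA h
        · exact absurd hrA (q.p6 r (by omega) hrle (hdiv r h hrle))
      exact ⟨hyB, hrtgB.tail hstepB⟩

end Sim

section Sim2

variable {A B : Set (ℕ × ℕ)} {g c g' : ℕ}

private lemma M2 (q : QD A B g c g') {p₀ y : ℕ × ℕ}
    (hp₀ : IsStart A p₀) (h : ReflTransGen (ThreadNext B) p₀ y) :
    (y ∈ A ∧ ReflTransGen (ThreadNext A) p₀ y) ∨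
    (y = (g', c) ∧ ∃ u, g ≤ u ∧ u < g' ∧ (∀ t, u < t → t ≤ g' → (t, c) ∉ A) ∧
      ReflTransGen (ThreadNext A) p₀ (u, c)) := by
  classical
  induction h with
  | refl => exact Or.inl ⟨hp₀.1, ReflTransGen.refl⟩
  | @tail z y hxy hstep ih =>
    obtain ⟨hyB, hyc, hyle, hymaxB⟩ := hstep
    obtain ⟨x1, x2⟩ := z
    obtain ⟨y1, y2⟩ := y
    have hy2 : y2 = x2 + 1 := hyc
    subst hy2
    rcases ih with ⟨hxA, hrtgA⟩ | ⟨hxeq, u, hgu, hug', hdiv, hrtgA⟩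
    · by_cases hcol : x2 + 1 = c
      · subst hcol
        rcases Nat.lt_trichotomy x1 g with he | he | he
        · -- entry below g
          left
          have hyA : (y1, x2 + 1) ∈ A := by
            rcases (memB_colc q).1 hyB with ⟨h1, _⟩ | rfl
            · exact h1
            · have := q.hgg; omega
          refine ⟨hyA, hrtgA.tail ⟨hyA, rfl, hyle, ?_⟩⟩
          intro r hrA hrle
          have hrg : r ≠ g := by omega
          exact hymaxB r ((memB_colc q).2 (Or.inl ⟨hrA, hrg⟩)) hrle
        · exfalso
          apply q.hleft
          have h2 : x2 + 1 - 1 = x2 := rfl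
          rw [h2, ← he]
          exact hxA
        · by_cases he2 : x1 < g'
          · -- g < x1 < g'
            have hx1A : (x1, x2 + 1) ∈ A := by
              apply q.p3 x1 he he2
              have h2 : x2 + 1 - 1 = x2 := rfl
              rw [h2]; exact hxA
            have hx1B : ((x1, x2 + 1) : ℕ × ℕ) ∈ B :=
              (memB_colc q).2 (Or.inl ⟨hx1A, by omega⟩)
            have hy1 : y1 = x1 := le_antisymm hyle (hymaxB x1 hx1B (le_refl _))
            subst hy1
            left
            exact ⟨hx1A, hrtgA.tail ⟨hx1A, rfl, le_refl _, fun r _ hrle => hrle⟩⟩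
          · -- x1 ≥ g'
            by_cases hT : ∃ s, g' < s ∧ s ≤ x1 ∧ (s, x2 + 1) ∈ A
            · obtain ⟨s, hs1, hs2, hs3⟩ := hT
              have hsB : ((s, x2 + 1) : ℕ × ℕ) ∈ B :=
                (memB_colc q).2 (Or.inl ⟨hs3, by have := q.hgg; omega⟩)
              have hsy : s ≤ y1 := hymaxB s hsB hs2
              have hyA : (y1, x2 + 1) ∈ A := by
                rcases (memB_colc q).1 hyB with ⟨h1, _⟩ | h1
                · exact h1
                · omega
              left
              refine ⟨hyA, hrtgA.tail ⟨hyA, rfl, hyle, ?_⟩⟩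
              intro r hrA hrle
              rcases eq_or_ne r g with rfl | hrg
              · have := q.hgg; omega
              · exact hymaxB r ((memB_colc q).2 (Or.inl ⟨hrA, hrg⟩)) hrle
            · push_neg at hT
              have hgx1 : g' ≤ x1 := by omega
              have hy1g' : y1 = g' := by
                have h1 : g' ≤ y1 := hymaxB g' ((memB_colc q).2 (Or.inr rfl)) hgx1
                rcases eq_or_lt_of_le h1 with h2 | h2
                · exact h2.symm
                · exfalso
                  rcases (memB_colc q).1 hyB with ⟨h3, _⟩ | h3
                  · exact hT y1 h2 hyle h3
                  · omega
              set u := Nat.findGreatest (fun s => (s, x2 + 1) ∈ A) x1 with hu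
              have hgle : g ≤ x1 := by have := q.hgg; omega
              have huA : (u, x2 + 1) ∈ A := by
                rw [hu]
                exact Nat.findGreatest_spec (P := fun s => (s, x2 + 1) ∈ A) hgle q.hgA
              have hgu : g ≤ u := by
                rw [hu]
                exact Nat.le_findGreatest (P := fun s => (s, x2 + 1) ∈ A) hgle q.hgA
              have hux : u ≤ x1 := by
                rw [hu]
                exact Nat.findGreatest_le x1
              have hug' : u < g' := by
                rcases Nat.lt_trichotomy u g' with h1 | h1 | h1
                · exact h1
                · exact absurd (h1 ▸ huA) q.hg'A
                · exact absurd huA (hT u h1 hux)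
              have hdiv : ∀ t, u < t → t ≤ g' → (t, x2 + 1) ∉ A := by
                intro t ht1 ht2 htA
                have : t ≤ u := by
                  rw [hu]
                  exact Nat.le_findGreatest (P := fun s => (s, x2 + 1) ∈ A) (le_trans ht2 hgx1) htA
                omega
              have hstepA : ThreadNext A (x1, x2) (u, x2 + 1) :=
                ⟨huA, rfl, hux, fun r hrA hrle => by
                  rw [hu]
                  exact Nat.le_findGreatest (P := fun s => (s, x2 + 1) ∈ A) hrle hrA⟩
              right
              refine ⟨by rw [hy1g'], u, hgu, hug', hdiv, hrtgA.tail hstepA⟩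
      · -- column ≠ c
        left
        have hyA : (y1, x2 + 1) ∈ A := (memB_col q hcol).1 hyB
        exact ⟨hyA, hrtgA.tail ⟨hyA, rfl, hyle,
          fun r hrA hrle => hymaxB r ((memB_col q hcol).2 hrA) hrle⟩⟩
    · -- we are at (g', c) on the B side, (u, c) on the A side
      have hx1 : x1 = g' := congrArg Prod.fst hxeq
      have hx2 : x2 = c := congrArg Prod.snd hxeq
      subst hx1
      subst hx2
      left
      have hyA : (y1, x2 + 1) ∈ A := (memB_col q (by omega)).1 hyB
      have hy1u : y1 ≤ u := by
        by_contra hgt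
        push_neg at hgt
        exact q.p6 y1 (by omega) hyle (hdiv y1 hgt hyle) hyA
      have hstepA : ThreadNext A (u, x2) (y1, x2 + 1) := by
        refine ⟨hyA, rfl, hy1u, ?_⟩
        intro r hrA hrle
        exact hymaxB r ((memB_col q (by omega)).2 hrA) (by omega)
      exact ⟨hyA, hrtgA.tail hstepA⟩

end Sim2

private lemma L2 {A B : Set (ℕ × ℕ)} (h : Rel' A B) :
    Prod.snd '' firstThread A = Prod.snd '' firstThread B ∧
    {p ∈ firstThread A | p.2 = 1} = {p ∈ firstThread B | p.2 = 1} ∧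
    Rel' (A \ firstThread A) (B \ firstThread B) := by
  rcases h with rfl | ⟨g, c, g', q⟩
  · exact ⟨rfl, rfl, Or.inl rfl⟩
  by_cases hs : ∃ p, IsStart A p
  · obtain ⟨p₀, hp₀⟩ := hs
    have hp₀B : IsStart B p₀ := (start_iff q).1 hp₀
    have M1' : ∀ x ∈ firstThread A, x ∈ firstThread B ∨
        (x.2 = c ∧ g ≤ x.1 ∧ x.1 < g' ∧ (∀ t, x.1 < t → t ≤ g' → (t, c) ∉ A) ∧
          (g', c) ∈ firstThread B) := by
      rintro x ⟨p, hp, hrtg⟩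
      obtain rfl : p₀ = p := start_unique hp₀ hp
      rcases M1 q hp₀ hrtg with ⟨_, h2⟩ | ⟨h1, h2, h3, h4, h5⟩
      · exact Or.inl ⟨p₀, hp₀B, h2⟩
      · exact Or.inr ⟨h1, h2, h3, h4, p₀, hp₀B, h5⟩
    have M2' : ∀ y ∈ firstThread B, y ∈ firstThread A ∨
        (y = (g', c) ∧ ∃ u, g ≤ u ∧ u < g' ∧ (∀ t, u < t → t ≤ g' → (t, c) ∉ A) ∧
          (u, c) ∈ firstThread A) := by
      rintro y ⟨p, hp, hrtg⟩
      obtain rfl : p₀ = p := start_unique hp₀B hp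
      rcases M2 q hp₀ hrtg with ⟨_, h2⟩ | ⟨h1, u, h2, h3, h4, h5⟩
      · exact Or.inl ⟨p₀, hp₀, h2⟩
      · exact Or.inr ⟨h1, u, h2, h3, h4, p₀, hp₀, h5⟩
    have G1 : Prod.snd '' firstThread A = Prod.snd '' firstThread B := by
      ext j
      constructor
      · rintro ⟨x, hx, rfl⟩
        rcases M1' x hx with h | h
        · exact ⟨x, h, rfl⟩
        · exact ⟨(g', c), h.2.2.2.2, h.1.symm⟩
      · rintro ⟨y, hy, rfl⟩
        rcases M2' y hy with h | h
        · exact ⟨y, h, rfl⟩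
        · obtain ⟨h1, u, _, _, _, h5⟩ := h
          exact ⟨(u, c), h5, by rw [h1]⟩
    have G2 : {p ∈ firstThread A | p.2 = 1} = {p ∈ firstThread B | p.2 = 1} := by
      ext x
      simp only [Set.mem_setOf_eq]
      constructor
      · rintro ⟨hx, h1⟩
        obtain rfl : x = p₀ := start_unique (ft_col1 hx h1) hp₀
        exact ⟨start_mem_ft hp₀B, h1⟩
      · rintro ⟨hx, h1⟩
        obtain rfl : x = p₀ := start_unique (ft_col1 hx h1) hp₀B
        exact ⟨start_mem_ft hp₀, h1⟩
    refine ⟨G1, G2, ?_⟩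
    by_cases hdiv : (g', c) ∈ firstThread B
    · -- divergence happened
      have hM2g : _ := M2' _ hdiv
      rcases hM2g with h | ⟨_, u, hgu, hug', hudiv, huθ⟩
      · exact absurd (ft_subset h) q.hg'A
      have hugB : (u, c) ∉ firstThread B := by
        intro h
        have h2 : ((u, c) : ℕ × ℕ) = (g', c) := ft_col_unique h hdiv rfl
        have : u = g' := congrArg Prod.fst h2
        omega
      have hcolA : ∀ w ∈ firstThread A, w.2 = c → w = (u, c) := fun w hw hwc =>
        ft_col_unique hw huθ hwc
      have hfeq : firstThread B = (firstThread A \ {(u, c)}) ∪ {(g', c)} := by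
        ext w
        constructor
        · intro hw
          rcases M2' w hw with h | h
          · exact Or.inl ⟨h, fun he => hugB (by rw [Set.mem_singleton_iff] at he; exact he ▸ hw)⟩
          · exact Or.inr (by rw [Set.mem_singleton_iff]; exact h.1)
        · rintro (⟨hw, hne⟩ | he)
          · rcases M1' w hw with h | h
            · exact h
            · exact absurd (hcolA w hw h.1) (by simpa using hne)
          · rw [Set.mem_singleton_iff] at he
            rw [he]
            exact hdiv
      by_cases hu : u = g
      · -- the two peeled diagrams coincide
        subst hu
        left
        ext w
        constructor
        · rintro ⟨hwA, hwθ⟩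
          have hwg : w ≠ (u, c) := fun he => hwθ (he ▸ huθ)
          have hwg' : w ≠ (g', c) := fun he => q.hg'A (he ▸ hwA)
          refine ⟨(memB_iff q w).2 (Or.inl ⟨hwA, hwg⟩), ?_⟩
          rw [hfeq]
          rintro (⟨h1, _⟩ | h1)
          · exact hwθ h1
          · exact hwg' (by simpa using h1)
        · rintro ⟨hwB, hwθ⟩
          rw [hfeq] at hwθ
          rcases (memB_iff q w).1 hwB with ⟨hwA, hwg⟩ | rfl
          · refine ⟨hwA, fun h => hwθ (Or.inl ⟨h, by simpa using hwg⟩)⟩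
          · exact absurd (Or.inr rfl) hwθ
      · -- new invariant data (g, c, u)
        right
        have hgu' : g < u := lt_of_le_of_ne hgu (Ne.symm hu)
        have hgθ : (g, c) ∉ firstThread A := by
          intro h
          have h2 := hcolA _ h rfl
          have : g = u := congrArg Prod.fst h2
          omega
        have huA : (u, c) ∈ A := ft_subset huθ
        have huB : ((u, c) : ℕ × ℕ) ∈ B :=
          (memB_iff q _).2 (Or.inl ⟨huA, fun he => hu (congrArg Prod.fst he)⟩)
        refine ⟨g, c, u, ⟨q.hc, hgu', ⟨q.hgA, hgθ⟩, ?_, ?_, ?_, ?_, ?_⟩⟩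
        · rintro ⟨_, h⟩
          exact h huθ
        · exact fun h => q.hleft h.1
        · intro p hp1 hp2 hpA
          refine ⟨q.p3 p hp1 (by omega) hpA.1, fun h => ?_⟩
          have h2 := hcolA _ h rfl
          have : p = u := congrArg Prod.fst h2
          omega
        · intro t ht1 ht2 htn hmem
          by_cases htA : (t, c) ∈ A
          · have htθ : (t, c) ∈ firstThread A := by
              by_contra h2
              exact htn ⟨htA, h2⟩
            have h2 := hcolA _ htθ rfl
            have h3 : t = u := congrArg Prod.fst h2
            subst h3
            exact hmem.2 (ft_right huθ hmem.1)
          · exact q.p6 t ht1 (by omega) htA hmem.1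
        · ext w
          constructor
          · rintro ⟨hwB, hwθ⟩
            rw [hfeq] at hwθ
            rcases (memB_iff q w).1 hwB with ⟨hwA, hwg⟩ | rfl
            · by_cases hwu : w = (u, c)
              · exact Or.inr (by rw [Set.mem_singleton_iff]; exact hwu)
              · exact Or.inl ⟨⟨hwA, fun h => hwθ (Or.inl ⟨h, by simpa using hwu⟩)⟩,
                  by simpa using hwg⟩
            · exact absurd (Or.inr rfl) hwθ
          · rintro (⟨⟨hwA, hwθ⟩, hwg⟩ | hwu)
            · have hwg' : w ≠ (g', c) := fun he => q.hg'A (he ▸ hwA)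
              refine ⟨(memB_iff q w).2 (Or.inl ⟨hwA, by simpa using hwg⟩), ?_⟩
              rw [hfeq]
              rintro (⟨h1, _⟩ | h1)
              · exact hwθ h1
              · exact hwg' (by simpa using h1)
            · rw [Set.mem_singleton_iff] at hwu
              subst hwu
              refine ⟨huB, ?_⟩
              rw [hfeq]
              rintro (⟨_, h1⟩ | h1)
              · exact h1 rfl
              · have : u = g' := by simpa using h1
                omega
    · -- no divergence : the two threads coincide
      have hgnot : (g, c) ∉ firstThread A := by
        intro hmem
        rcases M1' _ hmem with h | h
        · rcases (memB_colc q).1 (ft_subset h) with ⟨_, hne⟩ | he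
          · exact hne rfl
          · have := q.hgg; omega
        · exact hdiv h.2.2.2.2
      have hfeq : firstThread A = firstThread B := by
        ext x
        constructor
        · intro hx
          rcases M1' x hx with h | h
          · exact h
          · exact absurd h.2.2.2.2 hdiv
        · intro hx
          rcases M2' x hx with h | h
          · exact h
          · exact absurd (h.1 ▸ hx) hdiv
      right
      refine ⟨g, c, g', ⟨q.hc, q.hgg, ⟨q.hgA, hgnot⟩, fun h => q.hg'A h.1,
        fun h => q.hleft h.1, ?_, ?_, ?_⟩⟩
      · -- p3
        intro p hp1 hp2 hpc1
        refine ⟨q.p3 p hp1 hp2 hpc1.1, ?_⟩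
        intro hpθ
        have hpc : ((p, c) : ℕ × ℕ).2 ≠ 1 := by have := q.hc; simp; omega
        obtain ⟨z, hzθ, hstep⟩ := ft_pred hpθ hpc
        obtain ⟨z1, z2⟩ := z
        have hzc : z2 + 1 = c := (hstep.2.1).symm
        have hzle : p ≤ z1 := hstep.2.2.1
        have hzmax := hstep.2.2.2
        have hzA : (z1, z2) ∈ A := ft_subset hzθ
        rcases eq_or_lt_of_le hzle with he | hlt
        · apply hpc1.2
          have hz2 : z2 = c - 1 := by have := q.hc; omega
          rw [← he, hz2] at hzθ
          exact hzθ
        · rcases lt_or_ge z1 g' with hzg | hzg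
          · have hz1A : (z1, c) ∈ A := by
              apply q.p3 z1 (by omega) hzg
              have hz2 : c - 1 = z2 := by have := q.hc; omega
              rw [hz2]
              exact hzA
            have : z1 ≤ p := hzmax z1 (by rw [hzc]; exact hz1A) (le_refl _)
            omega
          · have hstepB : ThreadNext B (z1, z2) (g', c) := by
              refine ⟨(memB_colc q).2 (Or.inr rfl), hzc.symm, hzg, ?_⟩
              intro s hsB hsle
              rw [hzc] at hsB
              rcases (memB_colc q).1 hsB with ⟨hsA, _⟩ | rfl
              · have : s ≤ p := hzmax s (by rw [hzc]; exact hsA) hsle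
                omega
              · exact le_refl _
            have hzB : (z1, z2) ∈ firstThread B := by
              rcases M1' _ hzθ with h | h
              · exact h
              · exact absurd h.2.2.2.2 hdiv
            exact hdiv (ft_tail hzB hstepB)
      · -- p6
        intro t ht1 ht2 htn hmem
        by_cases htA : (t, c) ∈ A
        · have htθ : (t, c) ∈ firstThread A := by
            by_contra h2
            exact htn ⟨htA, h2⟩
          exact hmem.2 (ft_right htθ hmem.1)
        · exact q.p6 t ht1 ht2 htA hmem.1
      · -- set identity
        rw [← hfeq]
        have h1 : ((g', c) : ℕ × ℕ) ∉ firstThread A := fun h => q.hg'A (ft_subset h)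
        ext w
        constructor
        · rintro ⟨hwB, hwθ⟩
          rcases (memB_iff q w).1 hwB with ⟨hwA, hne⟩ | rfl
          · exact Or.inl ⟨⟨hwA, hwθ⟩, by simpa using hne⟩
          · exact Or.inr rfl
        · rintro (⟨⟨hwA, hwθ⟩, hne⟩ | rfl)
          · exact ⟨(memB_iff q w).2 (Or.inl ⟨hwA, by simpa using hne⟩), hwθ⟩
          · exact ⟨(memB_iff q _).2 (Or.inr rfl), h1⟩
  · -- no start at all
    have hftA : firstThread A = ∅ :=
      Set.eq_empty_iff_forall_notMem.2 fun x ⟨p, hp, _⟩ => hs ⟨p, hp⟩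
    have hftB : firstThread B = ∅ :=
      Set.eq_empty_iff_forall_notMem.2 fun x ⟨p, hp, _⟩ => hs ⟨p, (start_iff q).2 hp⟩
    rw [hftA, hftB]
    refine ⟨rfl, rfl, ?_⟩
    rw [Set.diff_empty, Set.diff_empty]
    exact Or.inr ⟨g, c, g', q⟩

private lemma L1 {K K' : Finset (ℕ × ℕ)} (h : NStep K K') :
    Rel' (↑K : Set (ℕ × ℕ)) (↑K' : Set (ℕ × ℕ)) := by
  obtain ⟨r, c, hrc, hc2, hleft, hmin, r'', hlt, hnot, hint, hK'⟩ := h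
  right
  refine ⟨r, c, r'', ⟨hc2, hlt, by exact_mod_cast hrc, ?_, ?_, ?_, ?_, ?_⟩⟩
  · intro h2
    exact hnot (by exact_mod_cast h2)
  · intro h2
    exact hleft (by exact_mod_cast h2)
  · intro p h1 h2 _
    exact_mod_cast hint p h1 h2
  · intro t ht1 ht2 htn htc1
    rcases eq_or_lt_of_le ht2 with rfl | h2
    · have h3 : ((t, c + 1) : ℕ × ℕ) ∈ K := by exact_mod_cast htc1
      have h4 : (t, c + 1 - 1) ∉ K := by
        have : c + 1 - 1 = c := rfl
        rw [this]
        intro h5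
        exact htn (by exact_mod_cast h5)
      rcases hmin t (c + 1) h3 (by omega) h4 with h5 | ⟨h5, _⟩ <;> omega
    · exact htn (by exact_mod_cast hint t ht1 h2)
  · rw [hK']
    push_cast
    rw [Set.insert_eq, Set.union_comm]

theorem stmt16 (a : List ℕ) (K K' : Finset (ℕ × ℕ))
    (hK : Relation.ReflTransGen KMove (skyline a) K) (h : NStep K K') :
    ∀ i : ℕ,
      Prod.snd '' threadAt (↑K) i = Prod.snd '' threadAt (↑K') i ∧
        {p ∈ threadAt (↑K : Set (ℕ × ℕ)) i | p.2 = 1} =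
          {p ∈ threadAt (↑K' : Set (ℕ × ℕ)) i | p.2 = 1} := by
  have key : ∀ i, Rel' (peel (↑K) i) (peel (↑K') i) := by
    intro i
    induction i with
    | zero => exact L1 h
    | succ n ih => exact (L2 ih).2.2
  intro i
  exact ⟨(L2 (key i)).1, (L2 (key i)).2.1⟩
end

section
/- For a Kohnert diagram K, the shape of ψ(K) equals the nearest skyline diagram K↑; here ψ(K) is the skyline filling whose k-th row consists of the row indices of the boxes in the k-th thread of K, written in weakly decreasing order. -/
/-!
An `NStep` raising the box `(r, c)` to `(r'', c)` acts on the diagram as the transposition of these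
two cells, and it maps every thread onto the corresponding thread of the new diagram. A thread
entering column `c` at `(r, c)` comes from a row `≥ r''`: the cell left of `(r, c)` is empty, and
from a row strictly between `r` and `r''` it would stay in its row. Hence column `c` has no box
strictly between `r` and `r''`, and after the move the thread enters at `(r'', c)` instead; as the
rows above `r` have no gaps from column `c` on, it continues as before. These properties survive
the removal of a first thread not passing through `(r, c)`, so all thread lengths are invariant
along the algorithm. The threads of the final skyline diagram are its rows, read from the bottom;
no box ever reaches column `0` because `KMove`s and `NStep`s only move boxes within their columns.
-/

open Relation Equiv

section Threads

variable {A : Set (ℕ × ℕ)} {p q x y : ℕ × ℕ}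

theorem ThreadNext.unique {q' : ℕ × ℕ} (h : ThreadNext A p q) (h' : ThreadNext A p q') :
    q = q' := by
  obtain ⟨hq, hc, hqp, hmax⟩ := h
  obtain ⟨hq', hc', hqp', hmax'⟩ := h'
  refine Prod.ext (le_antisymm ?_ ?_) (hc.trans hc'.symm)
  · exact hmax' q.1 (by rw [← hc]; exact hq) hqp
  · exact hmax q'.1 (by rw [← hc']; exact hq') hqp'

theorem IsStart.unique (h : IsStart A p) (h' : IsStart A q) : p = q := by
  obtain ⟨hp, hc, hmin⟩ := h
  obtain ⟨hq, hc', hmin'⟩ := h'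
  refine Prod.ext (le_antisymm ?_ ?_) (hc.trans hc'.symm)
  · exact hmin q.1 (by rw [← hc']; exact hq)
  · exact hmin' p.1 (by rw [← hc]; exact hp)

theorem threadNext_of_mem_right (h : (p.1, p.2 + 1) ∈ A) : ThreadNext A p (p.1, p.2 + 1) :=
  ⟨h, rfl, le_rfl, fun _ _ hr => hr⟩

theorem exists_threadNext {γ : ℕ} (hγ : (γ, p.2 + 1) ∈ A) (hle : γ ≤ p.1) :
    ∃ q, ThreadNext A p q := by
  obtain ⟨m, ⟨hmA, hmp⟩, hmax⟩ := Set.exists_max_image {g | (g, p.2 + 1) ∈ A ∧ g ≤ p.1} id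
    ((Set.finite_Iic p.1).subset fun g hg => hg.2) ⟨γ, hγ, hle⟩
  exact ⟨(m, p.2 + 1), hmA, rfl, hmp, fun g hg hgp => hmax g ⟨hg, hgp⟩⟩

theorem fst_le_of_reflTransGen_threadNext (h : ReflTransGen (ThreadNext A) p x) : x.1 ≤ p.1 := by
  induction h with
  | refl => exact le_rfl
  | tail _ hstep ih => exact hstep.2.2.1.trans ih

theorem firstThread_subset : firstThread A ⊆ A := by
  rintro x ⟨p, hp, hpx⟩
  rcases hpx.cases_tail with rfl | ⟨y, -, hyx⟩
  exacts [hp.1, hyx.1]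

theorem fst_le_of_mem_firstThread (hp : IsStart A p) (hx : x ∈ firstThread A) : x.1 ≤ p.1 := by
  obtain ⟨p', hp', hpx⟩ := hx
  exact hp'.unique hp ▸ fst_le_of_reflTransGen_threadNext hpx

theorem mem_firstThread_of_threadNext (hx : x ∈ firstThread A) (h : ThreadNext A x y) :
    y ∈ firstThread A := by
  obtain ⟨p, hp, hpx⟩ := hx
  exact ⟨p, hp, hpx.tail h⟩

theorem exists_threadNext_of_mem_firstThread (hx : x ∈ firstThread A) (hcol : x.2 ≠ 1) :
    ∃ p ∈ firstThread A, ThreadNext A p x := by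
  obtain ⟨p, hp, hpx⟩ := hx
  rcases hpx.cases_tail with rfl | ⟨y, hpy, hyx⟩
  exacts [absurd hp.2.1 hcol, ⟨y, ⟨p, hp, hpy⟩, hyx⟩]

theorem mem_firstThread_of_row {γ j l : ℕ} (hj : (γ, j) ∈ firstThread A) (hjl : j ≤ l)
    (hrow : ∀ k, j < k → k ≤ l → (γ, k) ∈ A) : (γ, l) ∈ firstThread A := by
  induction l, hjl using Nat.le_induction with
  | base => exact hj
  | succ l hjl ih =>
    exact mem_firstThread_of_threadNext (ih fun k hk hkl => hrow k hk (by omega))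
      (threadNext_of_mem_right (hrow (l + 1) (by omega) le_rfl))

end Threads

theorem peel_succ' (X : Set (ℕ × ℕ)) (i : ℕ) : peel X (i + 1) = peel (X \ firstThread X) i := by
  induction i with
  | zero => rfl
  | succ i ih => rw [peel, ih, peel]

theorem threadAt_succ (X : Set (ℕ × ℕ)) (i : ℕ) :
    threadAt X (i + 1) = threadAt (X \ firstThread X) i := by
  rw [threadAt, peel_succ', threadAt]

theorem peel_subset (X : Set (ℕ × ℕ)) (i : ℕ) : peel X i ⊆ X := by
  induction i with
  | zero => exact subset_rfl
  | succ i ih => exact Set.sdiff_subset.trans ih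

theorem threadAt_subset (X : Set (ℕ × ℕ)) (i : ℕ) : threadAt X i ⊆ X :=
  firstThread_subset.trans (peel_subset X i)

section Raising

theorem image_swap_of_notMem {α : Type*} [DecidableEq α] {X : Set α} {a b : α} (ha : a ∉ X)
    (hb : b ∉ X) : swap a b '' X = X := by
  ext x
  rw [Set.mem_image_equiv, symm_swap, swap_apply_def]
  split_ifs with h1 h2 <;> simp_all

variable {A : Set (ℕ × ℕ)} {r c r'' : ℕ}

theorem swap_apply_of_snd_ne {x : ℕ × ℕ} (hx : x.2 ≠ c) : swap (r, c) (r'', c) x = x :=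
  swap_apply_of_ne_of_ne (fun h => hx (by rw [h])) (fun h => hx (by rw [h]))

theorem mem_swap_image_of_snd_ne {x : ℕ × ℕ} (hx : x.2 ≠ c) :
    x ∈ swap (r, c) (r'', c) '' A ↔ x ∈ A := by
  rw [Set.mem_image_equiv, symm_swap, swap_apply_of_snd_ne hx]

/-- The position of a box `(r, c)` that an `NStep` raises to `(r'', c)`, weakened just enough to
survive the removal of a first thread avoiding `(r, c)`. -/
structure SafeRaise (A : Set (ℕ × ℕ)) (r c r'' : ℕ) : Prop where
  two_le : 2 ≤ c
  lt : r < r''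
  mem : (r, c) ∈ A
  notMem : (r'', c) ∉ A
  notMem_left : (r, c - 1) ∉ A
  mem_of_left : ∀ γ, r < γ → γ < r'' → (γ, c - 1) ∈ A → (γ, c) ∈ A
  mem_row_of_mem : ∀ γ, r < γ → γ < r'' → (γ, c) ∈ A → ∀ j, 1 ≤ j → j ≤ c → (γ, j) ∈ A
  mem_of_right : ∀ γ, r < γ → ∀ j, c ≤ j → (γ, j + 1) ∈ A → (γ, j) ∈ A

namespace SafeRaise

theorem swap_apply_of_mem (hI : SafeRaise A r c r'') {x : ℕ × ℕ} (hx : x ∈ A)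
    (hxr : x ≠ (r, c)) : swap (r, c) (r'', c) x = x :=
  swap_apply_of_ne_of_ne hxr (ne_of_mem_of_not_mem hx hI.notMem)

theorem mem_swap_image_col (hI : SafeRaise A r c r'') {γ : ℕ} :
    (γ, c) ∈ swap (r, c) (r'', c) '' A ↔ γ = r'' ∨ (γ ≠ r ∧ (γ, c) ∈ A) := by
  have := hI.lt
  rw [Set.mem_image_equiv, symm_swap, swap_apply_def]
  split_ifs with h1 h2 <;> simp_all [hI.mem, hI.notMem, this.ne]

theorem le_fst_of_threadNext (hI : SafeRaise A r c r'') {p : ℕ × ℕ} (hp : p ∈ A)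
    (h : ThreadNext A p (r, c)) : r'' ≤ p.1 ∧ ∀ m, r < m → m < r'' → (m, c) ∉ A := by
  obtain ⟨p1, p2⟩ := p
  obtain ⟨-, hc, hrp, hmax⟩ := h
  simp only at hc hrp hmax
  subst hc
  have hpr : p1 ≠ r := by rintro rfl; exact hI.notMem_left (by simpa using hp)
  have hle : r'' ≤ p1 := by
    by_contra! hlt
    have := hmax p1 (hI.mem_of_left p1 (by omega) hlt (by simpa using hp)) le_rfl
    omega
  exact ⟨hle, fun m h1 h2 hm => by have := hmax m hm (by omega); omega⟩

theorem fst_le_of_mem_firstThread_of_mem (hI : SafeRaise A r c r'') {x : ℕ × ℕ}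
    (hx : x ∈ firstThread A) {m : ℕ} (h1 : r < m) (h2 : m < r'') (hm : (m, c) ∈ A) :
    x.1 ≤ m := by
  obtain ⟨p, hp, hpx⟩ := hx
  have hm1 := hI.mem_row_of_mem m h1 h2 hm 1 le_rfl (by have := hI.two_le; omega)
  exact (fst_le_of_reflTransGen_threadNext hpx).trans (hp.2.2 m hm1)

theorem notMem_of_mem_firstThread (hI : SafeRaise A r c r'') (h : (r, c) ∈ firstThread A) :
    ∀ m, r < m → m < r'' → (m, c) ∉ A := by
  have := hI.two_le
  obtain ⟨p, hp, hpr⟩ := exists_threadNext_of_mem_firstThread h (by simp only; omega)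
  exact (hI.le_fst_of_threadNext (firstThread_subset hp) hpr).2

theorem threadNext_swap_into (hI : SafeRaise A r c r'') {p : ℕ × ℕ} (hp : p ∈ A)
    (h : ThreadNext A p (r, c)) : ThreadNext (swap (r, c) (r'', c) '' A) p (r'', c) := by
  obtain ⟨hle, -⟩ := hI.le_fst_of_threadNext hp h
  obtain ⟨-, hc, -, hmax⟩ := h
  refine ⟨hI.mem_swap_image_col.2 (Or.inl rfl), hc, hle, fun γ hγ hγp => ?_⟩
  rw [← hc] at hγ hmax
  rcases hI.mem_swap_image_col.1 hγ with rfl | ⟨-, hγA⟩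
  · exact le_rfl
  · exact (hmax γ hγA hγp).trans hI.lt.le

theorem threadNext_swap_from (hI : SafeRaise A r c r'') {q : ℕ × ℕ}
    (h : ThreadNext A (r, c) q) (hgap : ∀ m, r < m → m < r'' → (m, c) ∉ A) :
    ThreadNext (swap (r, c) (r'', c) '' A) (r'', c) q := by
  obtain ⟨hq, hc, hqr, hmax⟩ := h
  refine ⟨(mem_swap_image_of_snd_ne (by simp [hc])).2 hq, hc, hqr.trans hI.lt.le,
    fun γ hγ hγr => ?_⟩
  rw [mem_swap_image_of_snd_ne (by simp)] at hγ
  by_contra! hlt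
  have hrγ : r < γ := by
    by_contra! hγr'
    exact hlt.not_ge (hmax γ hγ hγr')
  have hγc := hI.mem_of_right γ hrγ c le_rfl hγ
  rcases hγr.lt_or_eq with h | rfl
  exacts [hgap γ hrγ h hγc, hI.notMem hγc]

theorem threadNext_swap_of_ne (hI : SafeRaise A r c r'') {p q : ℕ × ℕ}
    (hq : q ≠ (r, c)) (hbnd : ∀ m, r < m → m < r'' → (m, c) ∈ A → p.1 ≤ m)
    (h : ThreadNext A p q) : ThreadNext (swap (r, c) (r'', c) '' A) p q := by
  obtain ⟨hqA, hc, hqp, hmax⟩ := h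
  refine ⟨⟨q, hqA, hI.swap_apply_of_mem hqA hq⟩, hc, hqp, fun γ hγ hγp => ?_⟩
  rw [Set.mem_image_equiv, symm_swap, swap_apply_def] at hγ
  split_ifs at hγ with h1 h2
  · exact absurd hγ hI.notMem
  · obtain ⟨rfl, hpc⟩ := Prod.mk.inj h2
    have hrq : r ≤ q.1 := hmax r (hpc ▸ hI.mem) (hI.lt.le.trans hγp)
    have hrq' : r ≠ q.1 := fun h => hq (Prod.ext h.symm (hc.trans hpc))
    by_contra! hlt
    have := hbnd q.1 (by omega) hlt (by rw [← hpc, ← hc]; exact hqA)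
    omega
  · exact hmax γ hγ hγp

theorem threadNext_swap (hI : SafeRaise A r c r'') {x q : ℕ × ℕ} (hx : x ∈ firstThread A)
    (h : ThreadNext A x q) :
    ThreadNext (swap (r, c) (r'', c) '' A) (swap (r, c) (r'', c) x) (swap (r, c) (r'', c) q) := by
  have hxA := firstThread_subset hx
  by_cases hq : q = (r, c)
  · subst hq
    have hxr : x ≠ (r, c) := by rintro rfl; simpa using h.2.1
    rw [swap_apply_left, hI.swap_apply_of_mem hxA hxr]
    exact hI.threadNext_swap_into hxA h
  rw [hI.swap_apply_of_mem h.1 hq]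
  by_cases hxr : x = (r, c)
  · subst hxr
    rw [swap_apply_left]
    exact hI.threadNext_swap_from h (hI.notMem_of_mem_firstThread hx)
  rw [hI.swap_apply_of_mem hxA hxr]
  exact hI.threadNext_swap_of_ne hq
    (fun m h1 h2 hm => hI.fst_le_of_mem_firstThread_of_mem hx h1 h2 hm) h

theorem exists_threadNext_of_threadNext_swap (hI : SafeRaise A r c r'') {x q' : ℕ × ℕ}
    (hx : x ∈ firstThread A)
    (h : ThreadNext (swap (r, c) (r'', c) '' A) (swap (r, c) (r'', c) x) q') :
    ∃ q, ThreadNext A x q := by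
  have hxA := firstThread_subset hx
  by_cases hxr : x = (r, c)
  · subst hxr
    rw [swap_apply_left] at h
    obtain ⟨hq', hc, hqr, -⟩ := h
    obtain ⟨q1, q2⟩ := q'
    simp only at hc hqr
    subst hc
    rw [mem_swap_image_of_snd_ne (by simp)] at hq'
    refine exists_threadNext hq' ?_
    by_contra! hlt
    have hγc := hI.mem_of_right q1 hlt c le_rfl hq'
    rcases hqr.lt_or_eq with h | rfl
    exacts [hI.notMem_of_mem_firstThread hx q1 hlt h hγc, hI.notMem hγc]
  · rw [hI.swap_apply_of_mem hxA hxr] at h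
    obtain ⟨hq', hc, hqx, -⟩ := h
    rw [Set.mem_image_equiv, symm_swap, swap_apply_def] at hq'
    split_ifs at hq' with h1 h2
    · exact absurd hq' hI.notMem
    · rw [h2] at hc hqx
      exact exists_threadNext (hc ▸ hI.mem) (hI.lt.le.trans hqx)
    · exact exists_threadNext (by rw [← hc]; exact hq') hqx

theorem isStart_swap_iff (hI : SafeRaise A r c r'') {p : ℕ × ℕ} :
    IsStart (swap (r, c) (r'', c) '' A) p ↔ IsStart A p := by
  have := hI.two_le
  have hcol : ∀ γ, (γ, 1) ∈ swap (r, c) (r'', c) '' A ↔ (γ, 1) ∈ A :=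
    fun γ => mem_swap_image_of_snd_ne (by simp only; omega)
  unfold IsStart
  constructor
  · rintro ⟨hp, hp1, hmin⟩
    exact ⟨(mem_swap_image_of_snd_ne (by omega)).1 hp, hp1, fun γ hγ => hmin γ ((hcol γ).2 hγ)⟩
  · rintro ⟨hp, hp1, hmin⟩
    exact ⟨(mem_swap_image_of_snd_ne (by omega)).2 hp, hp1, fun γ hγ => hmin γ ((hcol γ).1 hγ)⟩

theorem firstThread_swap (hI : SafeRaise A r c r'') :
    firstThread (swap (r, c) (r'', c) '' A) = swap (r, c) (r'', c) '' firstThread A := by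
  have := hI.two_le
  apply Set.Subset.antisymm
  · rintro y ⟨p, hp, hpy⟩
    have hpA := hI.isStart_swap_iff.1 hp
    induction hpy with
    | refl => exact ⟨p, ⟨p, hpA, .refl⟩, swap_apply_of_snd_ne (by rw [hpA.2.1]; omega)⟩
    | tail _ hstep ih =>
      obtain ⟨x, hx, rfl⟩ := ih
      obtain ⟨w, hw⟩ := hI.exists_threadNext_of_threadNext_swap hx hstep
      exact ⟨w, mem_firstThread_of_threadNext hx hw, (hI.threadNext_swap hx hw).unique hstep⟩
  · rintro _ ⟨x, ⟨p, hp, hpx⟩, rfl⟩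
    refine ⟨p, hI.isStart_swap_iff.2 hp, ?_⟩
    induction hpx with
    | refl => rw [swap_apply_of_snd_ne (by rw [hp.2.1]; omega)]
    | tail hpy hstep ih => exact ih.tail (hI.threadNext_swap ⟨p, hp, hpy⟩ hstep)

theorem diff_firstThread (hI : SafeRaise A r c r'') (h : (r, c) ∉ firstThread A) :
    SafeRaise (A \ firstThread A) r c r'' where
  two_le := hI.two_le
  lt := hI.lt
  mem := ⟨hI.mem, h⟩
  notMem h' := hI.notMem h'.1
  notMem_left h' := hI.notMem_left h'.1
  mem_of_left γ h1 h2 hγ := by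
    have hγc := hI.mem_of_left γ h1 h2 hγ.1
    refine ⟨hγc, fun hγT => hγ.2 ?_⟩
    have := hI.two_le
    -- the rows of the thread never exceed its start, which lies weakly below row `γ`
    obtain ⟨p, hpT, hp⟩ := exists_threadNext_of_mem_firstThread hγT (by simp only; omega)
    have hγp : γ ≤ p.1 := hp.2.2.1
    have hpγ : p.1 ≤ γ := hI.fst_le_of_mem_firstThread_of_mem hpT h1 h2 hγc
    have hpc : p.2 = c - 1 := by have := hp.2.1; simp only at this; omega
    rwa [show p = (γ, c - 1) from Prod.ext (le_antisymm hpγ hγp) hpc] at hpT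
  mem_row_of_mem γ h1 h2 hγ j hj hjc :=
    ⟨hI.mem_row_of_mem γ h1 h2 hγ.1 j hj hjc, fun hjT => hγ.2 (mem_firstThread_of_row hjT hjc
      fun k hk hkc => hI.mem_row_of_mem γ h1 h2 hγ.1 k (by omega) hkc)⟩
  mem_of_right γ h1 j hj hγ :=
    ⟨hI.mem_of_right γ h1 j hj hγ.1, fun hT =>
      hγ.2 (mem_firstThread_of_threadNext hT (threadNext_of_mem_right (p := (γ, j)) hγ.1))⟩

theorem threadAt_swap (hI : SafeRaise A r c r'') (i : ℕ) :
    threadAt (swap (r, c) (r'', c) '' A) i = swap (r, c) (r'', c) '' threadAt A i := by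
  induction i generalizing A with
  | zero => exact hI.firstThread_swap
  | succ i ih =>
    rw [threadAt_succ, threadAt_succ, hI.firstThread_swap,
      ← Set.image_sdiff (swap (r, c) (r'', c)).injective]
    by_cases h : (r, c) ∈ firstThread A
    · have hr : (r, c) ∉ A \ firstThread A := fun h' => h'.2 h
      have hr'' : (r'', c) ∉ A \ firstThread A := fun h' => hI.notMem h'.1
      rw [image_swap_of_notMem hr hr'', image_swap_of_notMem
        (fun h' => hr (threadAt_subset _ i h')) (fun h' => hr'' (threadAt_subset _ i h'))]
    · exact ih (hI.diff_firstThread h)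

theorem ncard_threadAt_swap (hI : SafeRaise A r c r'') (i : ℕ) :
    (threadAt (swap (r, c) (r'', c) '' A) i).ncard = (threadAt A i).ncard := by
  rw [hI.threadAt_swap, Set.ncard_image_of_injective _ (swap _ _).injective]

end SafeRaise

end Raising

section Moves

theorem Relation.ReflTransGen.apply_eq {α β : Type*} {R : α → α → Prop} {a b : α}
    (h : ReflTransGen R a b) (f : α → β) (hf : ∀ a b, R a b → f a = f b) : f a = f b := by
  induction h with
  | refl => rfl
  | tail _ hbc ih => exact ih.trans (hf _ _ hbc)

theorem mem_of_le_of_forall_mem_left {X : Set (ℕ × ℕ)} {γ l j : ℕ}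
    (hleft : ∀ k, 1 ≤ k → (γ, k + 1) ∈ X → (γ, k) ∈ X) (hl : (γ, l) ∈ X) (hj : 1 ≤ j)
    (hjl : j ≤ l) : (γ, j) ∈ X := by
  induction l, hjl using Nat.le_induction with
  | base => exact hl
  | succ l hjl ih => exact ih (hleft l (hj.trans hjl) hl)

theorem snd_swap_apply (r c r'' : ℕ) (x : ℕ × ℕ) : (swap (r, c) (r'', c) x).2 = x.2 := by
  rw [swap_apply_def]
  split_ifs with h1 h2 <;> simp_all

theorem image_snd_image_swap (A : Set (ℕ × ℕ)) (r c r'' : ℕ) :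
    Prod.snd '' (swap (r, c) (r'', c) '' A) = Prod.snd '' A := by
  simp only [Set.image_image, snd_swap_apply]

theorem coe_insert_erase_eq_image_swap {K : Finset (ℕ × ℕ)} {a b : ℕ × ℕ} (ha : a ∈ K)
    (hb : b ∉ K) : (↑(insert b (K.erase a)) : Set (ℕ × ℕ)) = swap a b '' ↑K := by
  rw [image_swap_of_mem_of_notMem ha hb, Finset.coe_insert, Finset.coe_erase,
    Set.insert_sdiff_singleton_comm (ne_of_mem_of_not_mem ha hb).symm]

variable {K K' : Finset (ℕ × ℕ)}

theorem KMove.image_snd (h : KMove K K') :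
    Prod.snd '' (K' : Set (ℕ × ℕ)) = Prod.snd '' (K : Set (ℕ × ℕ)) := by
  obtain ⟨r, c, r', hrc, -, -, -, hnm, -, rfl⟩ := h
  rw [coe_insert_erase_eq_image_swap hrc hnm, image_snd_image_swap]

theorem NStep.exists_safeRaise (h : NStep K K') :
    ∃ r c r'', SafeRaise ↑K r c r'' ∧ (↑K' : Set (ℕ × ℕ)) = swap (r, c) (r'', c) '' ↑K := by
  obtain ⟨r, c, hrc, hc, hgap, hfirst, r'', hlt, hnm, hbetw, rfl⟩ := h
  -- rows above `r` have no gaps, as `(r, c)` is the highest box with an empty space to its left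
  have hleft : ∀ γ, r < γ → ∀ j, 1 ≤ j → (γ, j + 1) ∈ K → (γ, j) ∈ K := by
    intro γ hγ j hj hmem
    by_contra hne
    rcases hfirst γ (j + 1) hmem (by omega) (by simpa using hne) with h | ⟨h, -⟩ <;> omega
  refine ⟨r, c, r'', ⟨hc, hlt, hrc, hnm, hgap, fun γ h1 h2 _ => hbetw γ h1 h2,
    fun γ h1 _ hγ j hj hjc => ?_, fun γ h1 j hj hγ => hleft γ h1 j (by omega) hγ⟩,
    coe_insert_erase_eq_image_swap hrc hnm⟩
  exact mem_of_le_of_forall_mem_left (X := ↑K) (hleft γ h1) hγ hj hjc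

theorem NStep.image_snd (h : NStep K K') :
    Prod.snd '' (K' : Set (ℕ × ℕ)) = Prod.snd '' (K : Set (ℕ × ℕ)) := by
  obtain ⟨r, c, r'', -, hK'⟩ := h.exists_safeRaise
  rw [hK', image_snd_image_swap]

theorem NStep.setOf_mem_col_one (h : NStep K K') : {q | (q, 1) ∈ K'} = {q | (q, 1) ∈ K} := by
  obtain ⟨r, c, r'', hI, hK'⟩ := h.exists_safeRaise
  have := hI.two_le
  ext q
  simp only [Set.mem_ofPred_eq, ← Finset.mem_coe, hK']
  exact mem_swap_image_of_snd_ne (by simp only; omega)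

theorem NStep.ncard_threadAt (h : NStep K K') (i : ℕ) :
    (threadAt ↑K' i).ncard = (threadAt ↑K i).ncard := by
  obtain ⟨r, c, r'', hI, hK'⟩ := h.exists_safeRaise
  rw [hK', hI.ncard_threadAt_swap]

theorem one_le_snd_of_mem_skyline {a : List ℕ} {p : ℕ × ℕ} (hp : p ∈ skyline a) : 1 ≤ p.2 := by
  simp only [skyline, Finset.mem_biUnion, Finset.mem_image] at hp
  obtain ⟨i, -, j, -, rfl⟩ := hp
  simp

end Moves

structure IsSkylineSet (X : Set (ℕ × ℕ)) : Prop where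
  one_le : ∀ p ∈ X, 1 ≤ p.2
  mem_left : ∀ p ∈ X, 2 ≤ p.2 → (p.1, p.2 - 1) ∈ X

namespace IsSkylineSet

variable {X : Set (ℕ × ℕ)}

theorem mem_of_le (hX : IsSkylineSet X) {γ l j : ℕ} (hl : (γ, l) ∈ X) (hj : 1 ≤ j)
    (hjl : j ≤ l) : (γ, j) ∈ X :=
  mem_of_le_of_forall_mem_left (fun k hk h => by simpa using hX.mem_left _ h (by simp; omega))
    hl hj hjl

theorem diff_row (hX : IsSkylineSet X) (ρ : ℕ) : IsSkylineSet (X \ {p | p.1 = ρ}) :=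
  ⟨fun p hp => hX.one_le p hp.1, fun p hp h2 => ⟨hX.mem_left p hp.1 h2, hp.2⟩⟩

theorem firstThread_eq (hX : IsSkylineSet X) {ρ : ℕ} (hρ : (ρ, 1) ∈ X)
    (hmin : ∀ q, (q, 1) ∈ X → ρ ≤ q) : firstThread X = X ∩ {p | p.1 = ρ} := by
  have hst : IsStart X (ρ, 1) := ⟨hρ, rfl, hmin⟩
  ext ⟨γ, j⟩
  constructor
  · intro hx
    have hxX := firstThread_subset hx
    exact ⟨hxX, le_antisymm (fst_le_of_mem_firstThread hst hx)
      (hmin γ (hX.mem_of_le hxX le_rfl (hX.one_le _ hxX)))⟩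
  · rintro ⟨hx, rfl⟩
    exact mem_firstThread_of_row ⟨_, hst, .refl⟩ (hX.one_le _ hx)
      fun k _ hk => hX.mem_of_le hx (by omega) hk

theorem threadAt_eq (hX : IsSkylineSet X) {ρ i : ℕ} (hρ : (ρ, 1) ∈ X)
    (hi : {q | q < ρ ∧ (q, 1) ∈ X}.ncard = i) : threadAt X i = X ∩ {p | p.1 = ρ} := by
  classical
  induction i generalizing X with
  | zero =>
    rw [Set.ncard_eq_zero ((Set.finite_Iio ρ).subset fun q hq => hq.1)] at hi
    exact hX.firstThread_eq hρ fun q hq => not_lt.1 fun hqρ =>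
      Set.eq_empty_iff_forall_notMem.1 hi q ⟨hqρ, hq⟩
  | succ i ih =>
    have hex : ∃ q, (q, 1) ∈ X := ⟨ρ, hρ⟩
    have hmin : ∀ q, (q, 1) ∈ X → Nat.find hex ≤ q := fun q hq => Nat.find_min' hex hq
    obtain ⟨q, hqρ, hq⟩ := Set.nonempty_of_ncard_ne_zero (s := {q | q < ρ ∧ (q, 1) ∈ X})
      (by omega)
    have hρ₀ρ : Nat.find hex < ρ := (hmin q hq).trans_lt hqρ
    rw [threadAt_succ, hX.firstThread_eq (Nat.find_spec hex) hmin, Set.sdiff_self_inter]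
    refine (ih (hX.diff_row _) ⟨hρ, hρ₀ρ.ne'⟩ ?_).trans ?_
    · have hset : {q | q < ρ ∧ (q, 1) ∈ X \ {p | p.1 = Nat.find hex}} =
          {q | q < ρ ∧ (q, 1) ∈ X} \ {Nat.find hex} := by
        ext q
        simp [and_assoc]
      rw [hset, Set.ncard_sdiff_singleton_of_mem (s := {q | q < ρ ∧ (q, 1) ∈ X})
        ⟨hρ₀ρ, Nat.find_spec hex⟩, hi, Nat.add_sub_cancel]
    · ext ⟨γ, j⟩
      simp only [Set.mem_inter_iff, Set.mem_sdiff, Set.mem_ofPred_eq]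
      constructor
      · rintro ⟨⟨h, -⟩, rfl⟩
        exact ⟨h, rfl⟩
      · rintro ⟨h, rfl⟩
        exact ⟨⟨h, hρ₀ρ.ne'⟩, rfl⟩

end IsSkylineSet

theorem ncard_inter_setOf_fst_eq (X : Set (ℕ × ℕ)) (ρ : ℕ) :
    (X ∩ {p | p.1 = ρ}).ncard = {c | (ρ, c) ∈ X}.ncard := by
  rw [← Set.ncard_image_of_injective {c | (ρ, c) ∈ X} (Prod.mk_right_injective ρ)]
  apply congrArg Set.ncard
  ext ⟨γ, j⟩
  simp only [Set.mem_image, Set.mem_inter_iff, Set.mem_ofPred_eq, Prod.mk.injEq]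
  constructor
  · rintro ⟨h, rfl⟩
    exact ⟨j, h, rfl, rfl⟩
  · rintro ⟨k, h, rfl, rfl⟩
    exact ⟨h, rfl⟩

theorem stmt17 (a : List ℕ) (K S : Finset (ℕ × ℕ))
    (hK : Relation.ReflTransGen KMove (skyline a) K)
    (hS : Relation.ReflTransGen NStep K S) (hsky : IsSkyline S) :
    (∀ r : ℕ, (r, 1) ∈ K →
        {c : ℕ | (r, c) ∈ S}.ncard =
          (threadAt (↑K) ({r' : ℕ | r' < r ∧ (r', 1) ∈ K}.ncard)).ncard) ∧
    (∀ r : ℕ, (r, 1) ∉ K → ∀ c, (r, c) ∉ S) := by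
  have hcols : Prod.snd '' (skyline a : Set (ℕ × ℕ)) = Prod.snd '' (S : Set (ℕ × ℕ)) :=
    (hK.apply_eq _ fun _ _ h => h.image_snd.symm).trans
      (hS.apply_eq _ fun _ _ h => h.image_snd.symm)
  have hpos : ∀ p ∈ S, 1 ≤ p.2 := fun p hp => by
    obtain ⟨q, hq, hqp⟩ := hcols ▸ Set.mem_image_of_mem Prod.snd (Finset.mem_coe.2 hp)
    exact hqp ▸ one_le_snd_of_mem_skyline hq
  have hcol : ∀ q, (q, 1) ∈ K ↔ (q, 1) ∈ S := Set.ext_iff.1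
    (hS.apply_eq (fun K => {q | (q, 1) ∈ K}) fun _ _ h => h.setOf_mem_col_one.symm)
  have hthreads := hS.apply_eq (fun K i => (threadAt ↑K i).ncard)
    fun _ _ h => funext fun i => (h.ncard_threadAt i).symm
  have hX : IsSkylineSet (S : Set (ℕ × ℕ)) := ⟨hpos, hsky⟩
  refine ⟨fun r hr => ?_, fun r hr c hc => hr ((hcol r).2 (hX.mem_of_le hc le_rfl (hpos _ hc)))⟩
  rw [congrFun hthreads, hX.threadAt_eq ((hcol r).1 hr) (by simp only [Finset.mem_coe, hcol]),
    ncard_inter_setOf_fst_eq]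
  rfl
end

section
/- For a weak composition a with nonzero entries forming an interval of positions ending at position k, the quasiLascoux polynomial Q̄_a equals the quasiGrothendieck polynomial S̄_{a⁺}(x_1,...,x_k); that is, Σ_{b ≥ a, b⁺=a⁺} Ā_b = Σ_{b⁺ = a⁺, ℓ₊(b) ≤ k} Ā_b. -/
def lpos (b : List ℕ) : ℕ := (b.reverse.dropWhile fun v => v == 0).length

lemma sum_posPart (l : List ℕ) : (_root_.posPart l).sum = l.sum := by
  induction l with
  | nil => rfl
  | cons x t ih =>
    unfold _root_.posPart at *
    rw [List.filter_cons]
    by_cases hx : x = 0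
    · simp [hx, ih]
    · simp [hx, ih]

lemma filter_take (p : ℕ → Bool) (l : List ℕ) (i : ℕ) :
    (l.take i).filter p = (l.filter p).take ((l.take i).countP p) := by
  induction l generalizing i with
  | nil => simp
  | cons x t ih =>
    cases i with
    | zero => simp
    | succ i =>
      by_cases hx : p x
      · simp [List.filter_cons, hx, List.countP_cons, ih i]
      · simp [List.filter_cons, hx, List.countP_cons, ih i]

lemma sum_take_mono (l : List ℕ) {m m' : ℕ} (h : m ≤ m') :
    (l.take m).sum ≤ (l.take m').sum := by
  have h2 : l.take m = (l.take m').take m := by rw [List.take_take, Nat.min_eq_left h]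
  rw [h2]
  exact ((l.take m').take_sublist m).sum_le_sum (fun i _ => Nat.zero_le i)

lemma len_tw_dw (l : List ℕ) (p : ℕ → Bool) :
    (l.takeWhile p).length + (l.dropWhile p).length = l.length := by
  conv_rhs => rw [← l.takeWhile_append_dropWhile (p := p)]
  rw [List.length_append]

lemma lpos_le_iff (b : List ℕ) (k : ℕ) : lpos b ≤ k ↔ ∀ x ∈ b.drop k, x = 0 := by
  unfold lpos
  constructor
  · intro h x hx
    have hx' : x ∈ b.reverse.take (b.length - k) := by
      rw [← List.reverse_drop]
      exact List.mem_reverse.mpr hx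
    have hlen : b.length - k ≤ (b.reverse.takeWhile (fun v => v == 0)).length := by
      have := len_tw_dw b.reverse (fun v => v == 0)
      simp only [List.length_reverse] at this
      omega
    have hmem : x ∈ b.reverse.takeWhile (fun v => v == 0) := by
      have heq : b.reverse.take (b.length - k)
          = (b.reverse.takeWhile (fun v => v == 0)).take (b.length - k) := by
        conv_lhs => rw [← b.reverse.takeWhile_append_dropWhile (p := fun v => v == 0)]
        rw [List.take_append_of_le_length hlen]
      rw [heq] at hx'
      exact List.mem_of_mem_take hx'
    simpa using List.mem_takeWhile_imp hmem
  · intro h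
    have hsplit : b.reverse = (b.drop k).reverse ++ (b.take k).reverse := by
      rw [← List.reverse_append, List.take_append_drop]
    rw [hsplit, List.dropWhile_append]
    have h1 : (b.drop k).reverse.dropWhile (fun v => v == 0) = [] := by
      rw [List.dropWhile_eq_nil_iff]
      intro x hx
      simpa using h x (List.mem_reverse.mp hx)
    simp [h1]
    calc ((b.take k).reverse.dropWhile (fun v => v == 0)).length
        ≤ (b.take k).reverse.length := ((b.take k).reverse.dropWhile_sublist _).length_le
      _ ≤ k := by simp [List.length_take]

lemma forall_mem_take {a : List ℕ} {m : ℕ} (P : ℕ → Prop)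
    (h : ∀ i (_ : i < a.length), i < m → P a[i]) : ∀ x ∈ a.take m, P x := by
  intro x hx
  obtain ⟨i, hi, hx⟩ := List.mem_iff_getElem.mp hx
  have hi' : i < a.length := lt_of_lt_of_le hi (by simp [List.length_take])
  have him : i < m := lt_of_lt_of_le hi (by simp [List.length_take])
  rw [List.getElem_take] at hx
  exact hx ▸ h i hi' him

lemma forall_mem_drop {a : List ℕ} {m : ℕ} (P : ℕ → Prop)
    (h : ∀ i (_ : i < a.length), m ≤ i → P a[i]) : ∀ x ∈ a.drop m, P x := by
  intro x hx
  obtain ⟨i, hi, hx⟩ := List.mem_iff_getElem.mp hx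
  rw [List.getElem_drop] at hx
  exact hx ▸ h (m + i) (by rw [List.length_drop] at hi; omega) (Nat.le_add_right _ _)

theorem stmt18 (n j k : ℕ) (a : List ℕ) (ha : a.length = n)
    (hj : 1 ≤ j) (hjk : j ≤ k) (hk : k ≤ n)
    (hint : ∀ i, i < n → (a.getD i 0 ≠ 0 ↔ j ≤ i + 1 ∧ i + 1 ≤ k)) :
    {b : List ℕ | Dominates b a ∧ posPart b = posPart a} =
      {b : List ℕ | b.length = n ∧ posPart b = posPart a ∧ lpos b ≤ k} ∧
    ∀ A : List ℕ → MvPolynomial ℕ (Polynomial ℤ),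
      (∑ᶠ b ∈ {b : List ℕ | Dominates b a ∧ posPart b = posPart a}, A b) =
        ∑ᶠ b ∈ {b : List ℕ | b.length = n ∧ posPart b = posPart a ∧ lpos b ≤ k}, A b := by
  set p : ℕ → Bool := fun v => v != 0 with hp
  -- entrywise facts about a
  have hgetE : ∀ i (_ : i < a.length), (a[i] ≠ 0 ↔ j ≤ i + 1 ∧ i + 1 ≤ k) := by
    intro i hi
    have := hint i (ha ▸ hi)
    rwa [List.getD_eq_getElem a 0 hi] at this
  have hlo : ∀ x ∈ a.take (j - 1), x = 0 := by
    refine forall_mem_take _ (fun i hi him => ?_)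
    by_contra hne
    have := (hgetE i hi).mp hne
    omega
  have hhi : ∀ x ∈ a.drop k, x = 0 := by
    refine forall_mem_drop _ (fun i hi him => ?_)
    by_contra hne
    have := (hgetE i hi).mp hne
    omega
  have hmid : ∀ x ∈ (a.drop (j - 1)).take (k - (j - 1)), x ≠ 0 := by
    intro x hx
    obtain ⟨i, hi, hx⟩ := List.mem_iff_getElem.mp hx
    have hi1 : i < k - (j - 1) := lt_of_lt_of_le hi (by simp [List.length_take])
    have hi2 : i < (a.drop (j - 1)).length := lt_of_lt_of_le hi (by simp [List.length_take])
    have hi3 : j - 1 + i < a.length := by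
      rw [List.length_drop] at hi2; omega
    have hx2 : x = a[j - 1 + i] := by
      rw [← hx, List.getElem_take, List.getElem_drop]
    rw [hx2]
    exact (hgetE _ hi3).mpr (by omega)
  -- sum facts
  have hsum_drop_a : (a.drop k).sum = 0 := List.sum_eq_zero_iff.mpr hhi
  have hsum_take_a : (a.take k).sum = a.sum := by
    conv_rhs => rw [← List.take_append_drop k a]
    rw [List.sum_append, hsum_drop_a, Nat.add_zero]
  -- count facts
  have hL : (k - (j - 1)) ≤ a.countP p := by
    have hsub : List.Sublist ((a.drop (j - 1)).take (k - (j - 1))) a :=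
      ((a.drop (j - 1)).take_sublist _).trans (a.drop_sublist _)
    have hlen : ((a.drop (j - 1)).take (k - (j - 1))).length = k - (j - 1) := by
      simp [List.length_take, List.length_drop, ha]; omega
    have hall : ((a.drop (j - 1)).take (k - (j - 1))).countP p
        = ((a.drop (j - 1)).take (k - (j - 1))).length :=
      List.countP_eq_length.mpr (fun x hx => by
        simpa [hp] using hmid x hx)
    calc k - (j - 1) = ((a.drop (j - 1)).take (k - (j - 1))).countP p := by rw [hall, hlen]
      _ ≤ a.countP p := hsub.countP_le
  have hca : ∀ i, (a.take i).countP p ≤ i - (j - 1) ∧ (a.take i).countP p ≤ a.countP p := by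
    intro i
    refine ⟨?_, (a.take_sublist i).countP_le⟩
    rcases le_or_gt i (j - 1) with h | h
    · have : a.take i = (a.take (j - 1)).take i := by
        rw [List.take_take, Nat.min_eq_left h]
      have hz : (a.take i).countP p = 0 := by
        rw [List.countP_eq_zero]
        intro x hx
        rw [this] at hx
        have : x = 0 := hlo x (List.mem_of_mem_take hx)
        simp [hp, this]
      omega
    · have hsplit : a.take i = a.take (j - 1) ++ (a.drop (j - 1)).take (i - (j - 1)) := by
        rw [← List.take_add]
        congr 1; omega
      rw [hsplit, List.countP_append]
      have h1 : (a.take (j - 1)).countP p = 0 := by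
        rw [List.countP_eq_zero]
        intro x hx
        simp [hp, hlo x hx]
      have h2 : ((a.drop (j - 1)).take (i - (j - 1))).countP p ≤ i - (j - 1) :=
        le_trans (List.countP_le_length (p := p)) (by simp [List.length_take])
      omega
  -- the key sum identity via filter
  have hsum_take : ∀ (l : List ℕ) (i : ℕ),
      (l.take i).sum = ((_root_.posPart l).take ((l.take i).countP p)).sum := by
    intro l i
    rw [← sum_posPart (l.take i)]
    unfold _root_.posPart
    rw [filter_take]
  -- main set equality
  have hset : {b : List ℕ | Dominates b a ∧ posPart b = posPart a} =
      {b : List ℕ | b.length = n ∧ posPart b = posPart a ∧ lpos b ≤ k} := by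
    ext b
    simp only [Set.mem_setOf_eq]
    constructor
    · rintro ⟨⟨hlen, hdom⟩, hpp⟩
      refine ⟨hlen.trans ha, hpp, ?_⟩
      rw [lpos_le_iff]
      have hsb : b.sum = a.sum := by
        rw [← sum_posPart b, ← sum_posPart a, hpp]
      have hsplit : b.sum = (b.take k).sum + (b.drop k).sum := by
        conv_lhs => rw [← List.take_append_drop k b]
        rw [List.sum_append]
      have hd := hdom k
      rw [hsum_take_a] at hd
      have : (b.drop k).sum = 0 := by omega
      exact fun x hx => List.sum_eq_zero_iff.mp this x hx
    · rintro ⟨hlen, hpp, hlp⟩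
      have hb0 : ∀ x ∈ b.drop k, x = 0 := (lpos_le_iff b k).mp hlp
      have hLb : b.countP p = a.countP p := by
        rw [List.countP_eq_length_filter, List.countP_eq_length_filter]
        show (_root_.posPart b).length = (_root_.posPart a).length
        rw [hpp]
      refine ⟨⟨hlen.trans ha.symm, fun i => ?_⟩, hpp⟩
      rw [hsum_take a i, hsum_take b i, hpp]
      apply sum_take_mono
      -- remains: count comparison
      have hsplitb : b.countP p = (b.take i).countP p + (b.drop i).countP p := by
        conv_lhs => rw [← List.take_append_drop i b]
        rw [List.countP_append]
      rcases le_or_gt k i with hki | hki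
      · -- b.drop i is all zeros
        have hdz : (b.drop i).countP p = 0 := by
          rw [List.countP_eq_zero]
          intro x hx
          have hx' : x ∈ b.drop k := by
            have : b.drop i = (b.drop k).drop (i - k) := by
              rw [List.drop_drop]
              congr 1; omega
            exact List.mem_of_mem_drop (by rwa [← this])
          simp [hp, hb0 x hx']
        have := (hca i).2
        omega
      · -- i < k
        have hdb : (b.drop i).countP p ≤ k - i := by
          have hsplit2 : b.drop i = (b.drop i).take (k - i) ++ b.drop k := by
            conv_lhs => rw [← List.take_append_drop (k - i) (b.drop i)]
            rw [List.drop_drop]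
            congr 2; omega
          rw [hsplit2, List.countP_append]
          have h1 : ((b.drop i).take (k - i)).countP p ≤ k - i :=
            le_trans (List.countP_le_length (p := p)) (by simp [List.length_take])
          have h2 : (b.drop k).countP p = 0 := by
            rw [List.countP_eq_zero]
            intro x hx
            simp [hp, hb0 x hx]
          omega
        have h1 := (hca i).1
        omega
  refine ⟨hset, fun A => by rw [hset]⟩
end
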